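/- arXiv:1805.10373 — 9 statements merged into one kernel-verified Lean document; each statement's English description precedes it below -/
import Mathlib

section
/- Let M be a submonoid of the additive monoid ℚ₊ of nonnegative rational numbers. Then M is a Prüfer monoid if and only if M is difference-closed. -/
/-!
A cyclic monoid `⟨q⟩` with `q ≥ 0` is difference-closed, and so is any increasing union of
such. Conversely, in a difference-closed monoid `M ⊆ ℚ₊` the subtractive Euclidean algorithm
never leaves `M`: writing `a = p / D` and `b = r / D` over a common denominator,
`gcd(p, r) / D ∈ M` generates both `a` and `b`. So the cyclic submonoids `⟨g⟩`, `g ∈ M`, form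
a directed family covering `M`, and since `M` is countable a cofinal chain
`⟨q₀⟩ ⊆ ⟨q₁⟩ ⊆ ⋯` exhausts it.
-/

/-- `M` is difference-closed: for any `a, b ∈ M` with `b ≤ a`, `a - b ∈ M`. -/
def DifferenceClosed (M : AddSubmonoid ℚ) : Prop :=
  ∀ a ∈ M, ∀ b ∈ M, b ≤ a → a - b ∈ M

/-- `M` is a Prüfer monoid: it is the union of an increasing sequence of cyclic
submonoids `⟨qₙ⟩` with `qₙ ∈ ℚ₊`. -/
def IsPruferMonoid (M : AddSubmonoid ℚ) : Prop :=
  ∃ q : ℕ → ℚ, (∀ n, 0 ≤ q n) ∧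
    (∀ n, AddSubmonoid.closure {q n} ≤ AddSubmonoid.closure {q (n + 1)}) ∧
    (M : Set ℚ) = ⋃ n, (AddSubmonoid.closure {q n} : Set ℚ)

lemma differenceClosed_closure_singleton {q : ℚ} (hq : 0 ≤ q) :
    DifferenceClosed (AddSubmonoid.closure {q}) := by
  rintro _ ha _ hb hba
  obtain ⟨i, rfl⟩ := AddSubmonoid.mem_closure_singleton.1 ha
  obtain ⟨j, rfl⟩ := AddSubmonoid.mem_closure_singleton.1 hb
  rcases le_or_gt j i with hji | hij
  · exact AddSubmonoid.mem_closure_singleton.2 ⟨i - j, by rw [sub_nsmul q hji, sub_eq_add_neg]⟩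
  · rw [le_antisymm hba (nsmul_le_nsmul_left hq hij.le), sub_self]
    exact zero_mem _

lemma IsPruferMonoid.differenceClosed {M : AddSubmonoid ℚ} (hM : IsPruferMonoid M) :
    DifferenceClosed M := by
  obtain ⟨q, hq0, hq_succ, hM_eq⟩ := hM
  have hq_mono : Monotone fun n => AddSubmonoid.closure {q n} := monotone_nat_of_le_succ hq_succ
  have mem_iff : ∀ x, x ∈ M ↔ ∃ n, x ∈ AddSubmonoid.closure {q n} := fun x => by
    rw [← SetLike.mem_coe, hM_eq, Set.mem_iUnion]; rfl
  intro a ha b hb hba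
  obtain ⟨m, hm⟩ := (mem_iff a).1 ha
  obtain ⟨n, hn⟩ := (mem_iff b).1 hb
  exact (mem_iff _).2 ⟨max m n, differenceClosed_closure_singleton (hq0 _) a
    (hq_mono (le_max_left m n) hm) b (hq_mono (le_max_right m n) hn) hba⟩

lemma DifferenceClosed.gcd_nsmul_mem {M : AddSubmonoid ℚ} (hd : DifferenceClosed M)
    {g : ℚ} (hg : 0 ≤ g) {p r : ℕ} (hp : p • g ∈ M) (hr : r • g ∈ M) :
    Nat.gcd p r • g ∈ M := by
  induction hs : p + r using Nat.strong_induction_on generalizing p r with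
  | _ s ih =>
    wlog hrp : r ≤ p generalizing p r
    · rw [Nat.gcd_comm]; exact this hr hp (by omega) (by omega)
    rcases Nat.eq_zero_or_pos r with rfl | hr_pos
    · rwa [Nat.gcd_zero_right]
    have hsub : (p - r) • g ∈ M := by
      rw [sub_nsmul g hrp, ← sub_eq_add_neg]
      exact hd _ hp _ hr (nsmul_le_nsmul_left hg hrp)
    rw [← Nat.gcd_sub_self_left hrp]
    exact ih (p - r + r) (by omega) hsub hr rfl

lemma Rat.exists_nsmul_inv_eq {a : ℚ} (ha : 0 ≤ a) {n : ℕ} (hn : 0 < n) (hdvd : a.den ∣ n) :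
    ∃ p : ℕ, p • (n : ℚ)⁻¹ = a := by
  obtain ⟨k, rfl⟩ := hdvd
  have hk : (k : ℚ) ≠ 0 := by exact_mod_cast (Nat.pos_of_mul_pos_left hn).ne'
  refine ⟨a.num.toNat * k, ?_⟩
  have hnum : ((a.num.toNat : ℕ) : ℚ) = a.num := by
    exact_mod_cast Int.toNat_of_nonneg (Rat.num_nonneg.2 ha)
  rw [nsmul_eq_mul, ← div_eq_mul_inv]
  push_cast
  rw [hnum, ← Rat.mul_den_eq_num, mul_div_mul_right _ _ hk,
    mul_div_cancel_right₀ _ (by exact_mod_cast a.den_ne_zero)]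

lemma nsmul_mem_closure_nsmul_of_dvd {A : Type*} [AddMonoid A] (x : A) {d p : ℕ} (h : d ∣ p) :
    p • x ∈ AddSubmonoid.closure {d • x} :=
  AddSubmonoid.mem_closure_singleton.2 ⟨p / d, by rw [← mul_nsmul, Nat.mul_div_cancel' h]⟩

lemma DifferenceClosed.exists_mem_closure_singleton {M : AddSubmonoid ℚ}
    (hM : ∀ x ∈ M, 0 ≤ x) (hd : DifferenceClosed M) {a b : ℚ} (ha : a ∈ M) (hb : b ∈ M) :
    ∃ g ∈ M, a ∈ AddSubmonoid.closure {g} ∧ b ∈ AddSubmonoid.closure {g} := by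
  have hD : 0 < a.den * b.den := Nat.mul_pos a.den_pos b.den_pos
  obtain ⟨p, hp⟩ := Rat.exists_nsmul_inv_eq (hM a ha) hD (dvd_mul_right _ _)
  obtain ⟨r, hr⟩ := Rat.exists_nsmul_inv_eq (hM b hb) hD (dvd_mul_left _ _)
  have hg : 0 ≤ ((a.den * b.den : ℕ) : ℚ)⁻¹ := by positivity
  generalize ((a.den * b.den : ℕ) : ℚ)⁻¹ = g at hp hr hg
  subst hp hr
  exact ⟨_, hd.gcd_nsmul_mem hg ha hb,
    nsmul_mem_closure_nsmul_of_dvd g (Nat.gcd_dvd_left p r),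
    nsmul_mem_closure_nsmul_of_dvd g (Nat.gcd_dvd_right p r)⟩

lemma AddSubmonoid.exists_monotone_closure_singleton_of_directed {A : Type*} [AddMonoid A]
    [Countable A] (M : AddSubmonoid A)
    (hdir : Directed (· ≤ ·) fun g : M => AddSubmonoid.closure {(g : A)}) :
    ∃ q : ℕ → M, Monotone (fun n => AddSubmonoid.closure {(q n : A)}) ∧
      (M : Set A) = ⋃ n, (AddSubmonoid.closure {(q n : A)} : Set A) := by
  have : Encodable M := Encodable.ofCountable M
  have : Inhabited M := ⟨0⟩
  refine ⟨hdir.sequence _, hdir.sequence_mono, Set.Subset.antisymm (fun a ha => ?_) ?_⟩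
  · exact Set.mem_iUnion.2 ⟨_, hdir.le_sequence ⟨a, ha⟩ (AddSubmonoid.subset_closure rfl)⟩
  · exact Set.iUnion_subset fun n =>
      (AddSubmonoid.closure_singleton_le_iff_mem _ M).2 (hdir.sequence _ n).2

lemma DifferenceClosed.isPruferMonoid {M : AddSubmonoid ℚ} (hM : ∀ x ∈ M, 0 ≤ x)
    (hd : DifferenceClosed M) : IsPruferMonoid M := by
  have hdir : Directed (· ≤ ·) fun g : M => AddSubmonoid.closure {(g : ℚ)} := fun a b => by
    obtain ⟨g, hg, ha, hb⟩ := hd.exists_mem_closure_singleton hM a.2 b.2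
    exact ⟨⟨g, hg⟩, (AddSubmonoid.closure_singleton_le_iff_mem _ _).2 ha,
      (AddSubmonoid.closure_singleton_le_iff_mem _ _).2 hb⟩
  obtain ⟨q, hq_mono, hM_eq⟩ := M.exists_monotone_closure_singleton_of_directed hdir
  exact ⟨fun n => q n, fun n => hM _ (q n).2, fun n => hq_mono n.le_succ, hM_eq⟩

theorem prufer_iff_differenceClosed (M : AddSubmonoid ℚ)
    (hM : ∀ x ∈ M, (0 : ℚ) ≤ x) :
    IsPruferMonoid M ↔ DifferenceClosed M :=
  ⟨IsPruferMonoid.differenceClosed, DifferenceClosed.isPruferMonoid hM⟩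
end

section
/- Let M be a submonoid of the additive monoid ℚ₊ of nonnegative rational numbers. Then M is difference-closed if and only if M satisfies the gcd/lcm condition. -/
/-- `M` satisfies the gcd/lcm condition: for any two elements `m₁/n₁, m₂/n₂` of `M`
written in reduced form, at least one of which is nonzero,
`gcd(m₁, m₂)/lcm(n₁, n₂) ∈ M`.  (For `a : ℚ`, `a.num`/`a.den` is the reduced form.) -/
def GcdLcmCondition (M : AddSubmonoid ℚ) : Prop :=
  ∀ a ∈ M, ∀ b ∈ M, (a ≠ 0 ∨ b ≠ 0) →
    ((Nat.gcd a.num.natAbs b.num.natAbs : ℚ) / (Nat.lcm a.den b.den : ℚ)) ∈ M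

/-!
For rationals `a = m₁/n₁` and `b = m₂/n₂` in lowest terms, the subgroup `ℤa + ℤb` of `ℚ` is
cyclic, generated by `g = gcd(m₁, m₂)/lcm(n₁, n₂)`: over the common denominator
`lcm(n₁, n₂)` the numerators of `a` and `b` become `m₁ n₂/d` and `m₂ n₁/d` (`d = gcd(n₁, n₂)`),
whose gcd is still `gcd(m₁, m₂)`.

If `M` is difference-closed, then `g ≥ 0` is a difference of two elements of `M` (the positive
and negative parts of a `ℤ`-combination of `a` and `b`), hence lies in `M`. Conversely, if
`g ∈ M` and `b ≤ a`, then `a - b` is a nonnegative multiple of `g`, hence lies in `M`.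
-/

open AddSubgroup

theorem AddSubgroup.closure_pair_intCast_mul {R : Type*} [Ring R] (A B : ℤ) (c : R) :
    closure {(A : R) * c, B * c} = zmultiples ((A.gcd B : R) * c) := by
  have := congrArg (map (zmultiplesHom R c)) (Int.closure_eq_zmultiples A B)
  simpa [AddMonoidHom.map_closure, AddMonoidHom.map_zmultiples, Set.image_pair, zsmul_eq_mul]
    using this

theorem AddSubgroup.exists_sub_of_mem_closure {G : Type*} [AddCommGroup G] {M : AddSubmonoid G}
    {z : G} (hz : z ∈ closure (M : Set G)) : ∃ x ∈ M, ∃ y ∈ M, z = x - y := by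
  induction hz using closure_induction with
  | mem x hx => exact ⟨x, hx, 0, zero_mem M, (sub_zero x).symm⟩
  | zero => exact ⟨0, zero_mem M, 0, zero_mem M, (sub_zero 0).symm⟩
  | add _ _ _ _ ihx ihy =>
    obtain ⟨x₁, hx₁, x₂, hx₂, rfl⟩ := ihx
    obtain ⟨y₁, hy₁, y₂, hy₂, rfl⟩ := ihy
    exact ⟨x₁ + y₁, add_mem hx₁ hy₁, x₂ + y₂, add_mem hx₂ hy₂, by abel⟩
  | neg _ _ ih =>
    obtain ⟨x₁, hx₁, x₂, hx₂, rfl⟩ := ih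
    exact ⟨x₂, hx₂, x₁, hx₁, neg_sub x₁ x₂⟩

theorem AddSubgroup.exists_nsmul_eq_of_mem_zmultiples {G : Type*} [AddCommGroup G] [LinearOrder G]
    [IsOrderedAddMonoid G] {g x : G} (hg : 0 < g) (hx : x ∈ zmultiples g) (hx₀ : 0 ≤ x) :
    ∃ n : ℕ, n • g = x := by
  obtain ⟨k, rfl⟩ := hx
  have hk : 0 ≤ k := (smul_nonneg_iff_nonneg_of_pos_right hg).mp hx₀
  exact ⟨k.toNat, by rw [← natCast_zsmul, Int.toNat_of_nonneg hk]⟩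

theorem Nat.gcd_mul_div_gcd_mul_div_gcd {m₁ n₁ m₂ n₂ : ℕ} (hn : 0 < n₁.gcd n₂)
    (h₁ : m₁.Coprime n₁) (h₂ : m₂.Coprime n₂) :
    (m₁ * (n₂ / n₁.gcd n₂)).gcd (m₂ * (n₁ / n₁.gcd n₂)) = m₁.gcd m₂ := by
  have hcop : (n₂ / n₁.gcd n₂).Coprime (n₁ / n₁.gcd n₂) := (coprime_div_gcd_div_gcd hn).symm
  have c₂ : (n₂ / n₁.gcd n₂).Coprime m₂ :=
    h₂.symm.coprime_dvd_left (div_dvd_of_dvd (gcd_dvd_right _ _))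
  have c₁ : (n₁ / n₁.gcd n₂).Coprime m₁ :=
    h₁.symm.coprime_dvd_left (div_dvd_of_dvd (gcd_dvd_left _ _))
  rw [(c₂.mul_right hcop).gcd_mul_right_cancel, c₁.gcd_mul_right_cancel_right]

namespace Rat

def gcd (a b : ℚ) : ℚ := (Nat.gcd a.num.natAbs b.num.natAbs : ℚ) / (Nat.lcm a.den b.den : ℚ)

theorem gcd_nonneg (a b : ℚ) : 0 ≤ gcd a b := by
  unfold gcd; positivity

theorem mul_den_mul_eq_num_mul (a : ℚ) (k : ℕ) :
    a * ((a.den * k : ℕ) : ℚ) = ((a.num * k : ℤ) : ℚ) := by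
  push_cast
  rw [← mul_assoc, mul_den_eq_num]

theorem closure_pair_eq_zmultiples_gcd (a b : ℚ) :
    AddSubgroup.closure {a, b} = zmultiples (gcd a b) := by
  set L := a.den.lcm b.den
  have hL : (L : ℚ) ≠ 0 := by exact_mod_cast Nat.lcm_ne_zero a.den_nz b.den_nz
  have hd : 0 < a.den.gcd b.den := Nat.gcd_pos_of_pos_left _ a.den_pos
  have hLa : a.den * (b.den / a.den.gcd b.den) = L :=
    (Nat.mul_div_assoc _ (Nat.gcd_dvd_right _ _)).symm
  have hLb : b.den * (a.den / a.den.gcd b.den) = L := by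
    rw [Nat.gcd_comm, ← Nat.mul_div_assoc _ (Nat.gcd_dvd_right _ _)]
    exact Nat.lcm_comm _ _
  have ha : a = ((a.num * (b.den / a.den.gcd b.den : ℕ) : ℤ) : ℚ) * (L : ℚ)⁻¹ := by
    rw [eq_mul_inv_iff_mul_eq₀ hL, ← hLa, mul_den_mul_eq_num_mul]
  have hb : b = ((b.num * (a.den / a.den.gcd b.den : ℕ) : ℤ) : ℚ) * (L : ℚ)⁻¹ := by
    rw [eq_mul_inv_iff_mul_eq₀ hL, ← hLb, mul_den_mul_eq_num_mul]
  have hgcd : (a.num * (b.den / a.den.gcd b.den : ℕ)).gcd (b.num * (a.den / a.den.gcd b.den : ℕ))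
      = a.num.natAbs.gcd b.num.natAbs := by
    rw [Int.gcd_def, Int.natAbs_mul, Int.natAbs_mul, Int.natAbs_natCast, Int.natAbs_natCast]
    exact Nat.gcd_mul_div_gcd_mul_div_gcd hd a.reduced b.reduced
  have := closure_pair_intCast_mul (a.num * (b.den / a.den.gcd b.den : ℕ))
    (b.num * (a.den / a.den.gcd b.den : ℕ)) (L : ℚ)⁻¹
  rwa [← ha, ← hb, hgcd, ← div_eq_mul_inv] at this

end Rat

theorem DifferenceClosed.mem_of_mem_closure {M : AddSubmonoid ℚ} (hM : DifferenceClosed M)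
    {z : ℚ} (hz : z ∈ AddSubgroup.closure (M : Set ℚ)) (hz₀ : 0 ≤ z) : z ∈ M := by
  obtain ⟨x, hx, y, hy, rfl⟩ := exists_sub_of_mem_closure hz
  exact hM x hx y hy (sub_nonneg.mp hz₀)

theorem differenceClosed_iff_gcdLcmCondition_general (M : AddSubmonoid ℚ) :
    DifferenceClosed M ↔ GcdLcmCondition M := by
  constructor
  · intro hM a ha b hb _
    have hpair : ({a, b} : Set ℚ) ⊆ M := Set.insert_subset_iff.mpr ⟨ha, by simpa using hb⟩
    have hg : Rat.gcd a b ∈ AddSubgroup.closure (M : Set ℚ) :=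
      closure_mono hpair (Rat.closure_pair_eq_zmultiples_gcd a b ▸ mem_zmultiples _)
    exact hM.mem_of_mem_closure hg (Rat.gcd_nonneg a b)
  · intro hM a ha b hb hba
    rcases eq_or_ne b 0 with rfl | hb₀
    · simpa using ha
    have ha' : a ∈ zmultiples (Rat.gcd a b) :=
      Rat.closure_pair_eq_zmultiples_gcd a b ▸ subset_closure (by simp)
    have hb' : b ∈ zmultiples (Rat.gcd a b) :=
      Rat.closure_pair_eq_zmultiples_gcd a b ▸ subset_closure (by simp)
    have hg : 0 < Rat.gcd a b := (Rat.gcd_nonneg a b).lt_of_ne fun h ↦ by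
      rw [← h, zmultiples_zero_eq_bot, mem_bot] at hb'
      exact hb₀ hb'
    obtain ⟨n, hn⟩ :=
      exists_nsmul_eq_of_mem_zmultiples hg (sub_mem ha' hb') (sub_nonneg.mpr hba)
    exact hn ▸ nsmul_mem (hM a ha b hb (Or.inr hb₀)) n

theorem differenceClosed_iff_gcdLcmCondition (M : AddSubmonoid ℚ)
    (hM : ∀ x ∈ M, (0 : ℚ) ≤ x) :
    DifferenceClosed M ↔ GcdLcmCondition M :=
  differenceClosed_iff_gcdLcmCondition_general M
end

section
/- Let M be a submonoid of the additive monoid ℚ₊ of nonnegative rational numbers. Then M is difference-closed if and only if M is integrally closed. -/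
/-- `M` is integrally closed: for every `n ∈ ℕ`, `n ≥ 1`, and any `x, y ∈ M` with
`y ≤ x`, if `n·(x - y) ∈ M` then `x - y ∈ M`. -/
def IntegrallyClosedMonoid (M : AddSubmonoid ℚ) : Prop :=
  ∀ n : ℕ, 0 < n → ∀ x ∈ M, ∀ y ∈ M, y ≤ x → (n : ℚ) * (x - y) ∈ M → x - y ∈ M

/-! Any positive element `a` of `M` is commensurable with every `q ≥ 0`: writing `q / a = m / n`
gives `n * q = m • a ∈ M`. Applied to `q = a - b`, integral closedness then yields `a - b ∈ M`. -/

theorem DifferenceClosed.integrallyClosedMonoid {M : AddSubmonoid ℚ} (h : DifferenceClosed M) :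
    IntegrallyClosedMonoid M :=
  fun _ _ x hx y hy hyx _ => h x hx y hy hyx

theorem AddSubmonoid.exists_pos_nat_mul_mem_of_pos_mem {M : AddSubmonoid ℚ} {a : ℚ} (ha : a ∈ M)
    (ha₀ : 0 < a) {q : ℚ} (hq : 0 ≤ q) : ∃ n : ℕ, 0 < n ∧ (n : ℚ) * q ∈ M := by
  obtain ⟨m, hm⟩ := Int.eq_ofNat_of_zero_le (Rat.num_nonneg.mpr (div_nonneg hq ha₀.le))
  refine ⟨(q / a).den, (q / a).den_pos, ?_⟩
  have hmul : ((q / a).den : ℚ) * q = m • a := by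
    calc ((q / a).den : ℚ) * q = (q / a).den * (q / a) * a := by field_simp
      _ = m • a := by rw [Rat.den_mul_eq_num, hm, nsmul_eq_mul]; push_cast; rfl
  exact hmul ▸ nsmul_mem ha m

theorem differenceClosed_iff_integrallyClosed (M : AddSubmonoid ℚ)
    (hM : ∀ x ∈ M, (0 : ℚ) ≤ x) :
    DifferenceClosed M ↔ IntegrallyClosedMonoid M := by
  refine ⟨DifferenceClosed.integrallyClosedMonoid, fun h a ha b hb hba => ?_⟩
  obtain rfl | hlt := hba.eq_or_lt
  · simpa only [sub_self] using M.zero_mem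
  obtain ⟨n, hn, hmem⟩ :=
    M.exists_pos_nat_mul_mem_of_pos_mem ha ((hM b hb).trans_lt hlt) (sub_nonneg.mpr hba)
  exact h n hn a ha b hb hba hmem
end

section
/- Let M and M′ be submonoids of the additive monoid ℚ₊ of nonnegative rational numbers that are isomorphic as additive monoids. Then M is difference-closed if and only if M′ is difference-closed. -/
/-!
Two rationals satisfy the integer relation `(y.num * x.den) • x = (x.num * y.den) • y`, which every
additive map `f` on a submonoid of `ℚ` respects; hence `x • f y = y • f x`, so `f` is multiplication
by a constant. An isomorphism `e` of submonoids of `ℚ₊` is thus multiplication by a positive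
constant, hence monotone both ways, and then it maps `e⁻¹ a - e⁻¹ b` to `a - b`.
-/

theorem Int.toNat_smul_sub_toNat_neg_smul {G : Type*} [AddCommGroup G] (a : ℤ) (g : G) :
    a.toNat • g - (-a).toNat • g = a • g := by
  rw [← natCast_zsmul, ← natCast_zsmul, ← sub_smul, Int.toNat_sub_toNat_neg]

namespace AddMonoidHom

section

variable {G V : Type*} [AddCommGroup G] [AddCommGroup V] {M : AddSubmonoid G}

theorem zsmul_apply_eq_of_zsmul_eq (f : M →+ V) {x y : M} {a b : ℤ}
    (h : a • (x : G) = b • (y : G)) : a • f x = b • f y := by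
  -- moving the negative parts of `a` and `b` across gives a relation with natural coefficients
  have hnat : a.toNat • x + (-b).toNat • y = b.toNat • y + (-a).toNat • x := by
    ext
    simp only [AddSubmonoid.coe_add, AddSubmonoidClass.coe_nsmul]
    rw [← sub_eq_sub_iff_add_eq_add, Int.toNat_smul_sub_toNat_neg_smul,
      Int.toNat_smul_sub_toNat_neg_smul, h]
  have hf := congrArg f hnat
  simp only [map_add, map_nsmul] at hf
  rw [← Int.toNat_smul_sub_toNat_neg_smul a, ← Int.toNat_smul_sub_toNat_neg_smul b,
    sub_eq_sub_iff_add_eq_add, hf]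

end

variable {V : Type*} [AddCommGroup V] [Module ℚ V] {M : AddSubmonoid ℚ}

theorem coe_smul_apply_comm (f : M →+ V) (x y : M) : (x : ℚ) • f y = (y : ℚ) • f x := by
  have hrel : ((y : ℚ).num * (x : ℚ).den) • (x : ℚ) = ((x : ℚ).num * (y : ℚ).den) • (y : ℚ) := by
    simp only [zsmul_eq_mul, Int.cast_mul, Int.cast_natCast]
    rw [mul_assoc, mul_assoc, Rat.den_mul_eq_num, Rat.den_mul_eq_num, mul_comm]
  have hf := f.zsmul_apply_eq_of_zsmul_eq hrel
  rw [← Int.cast_smul_eq_zsmul ℚ, ← Int.cast_smul_eq_zsmul ℚ] at hf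
  have hden : ((x : ℚ).den * (y : ℚ).den : ℚ) ≠ 0 := by positivity
  apply smul_right_injective V hden
  simp only [smul_smul, Int.cast_mul, Int.cast_natCast] at hf ⊢
  convert hf.symm using 2
  · rw [mul_right_comm, Rat.den_mul_eq_num]
  · rw [mul_assoc, Rat.den_mul_eq_num, mul_comm]

theorem monotone_of_nonneg (f : M →+ ℚ) (hM : ∀ x ∈ M, 0 ≤ x) (hf : ∀ x, 0 ≤ f x) :
    Monotone f := by
  intro x y hxy
  rcases (hM x x.2).eq_or_lt with hx | hx
  · rw [show x = 0 from Subtype.ext hx.symm, map_zero]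
    exact hf y
  · refine le_of_mul_le_mul_left ?_ hx
    calc (x : ℚ) * f x ≤ y * f x := mul_le_mul_of_nonneg_right hxy (hf x)
      _ = x * f y := by simpa using (f.coe_smul_apply_comm x y).symm

end AddMonoidHom

theorem DifferenceClosed.of_addEquiv_of_monotone {M M' : AddSubmonoid ℚ} (e : M ≃+ M')
    (he : Monotone e.symm) (hDC : DifferenceClosed M) : DifferenceClosed M' := by
  intro a ha b hb hba
  set u : M' := ⟨a, ha⟩
  set v : M' := ⟨b, hb⟩
  have hvu : e.symm v ≤ e.symm u := he (show v ≤ u from hba)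
  let d : M := ⟨e.symm u - e.symm v, hDC _ (e.symm u).2 _ (e.symm v).2 hvu⟩
  have hd : d + e.symm v = e.symm u := Subtype.ext (sub_add_cancel _ _)
  have hed : e d + v = u := by
    rw [← e.apply_symm_apply v, ← map_add, hd, e.apply_symm_apply]
  change (u : ℚ) - v ∈ M'
  rw [← hed, AddSubmonoid.coe_add, add_sub_cancel_right]
  exact (e d).2

theorem DifferenceClosed.of_addEquiv {M M' : AddSubmonoid ℚ} (hM : ∀ x ∈ M, 0 ≤ x)
    (hM' : ∀ x ∈ M', 0 ≤ x) (e : M ≃+ M') (hDC : DifferenceClosed M) : DifferenceClosed M' :=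
  hDC.of_addEquiv_of_monotone e fun _ _ hxy =>
    (M.subtype.comp e.symm.toAddMonoidHom).monotone_of_nonneg hM' (fun x => hM _ (e.symm x).2) hxy

theorem differenceClosed_iff_of_addEquiv (M M' : AddSubmonoid ℚ)
    (hM : ∀ x ∈ M, (0 : ℚ) ≤ x) (hM' : ∀ x ∈ M', (0 : ℚ) ≤ x)
    (h : Nonempty (M ≃+ M')) :
    DifferenceClosed M ↔ DifferenceClosed M' := by
  obtain ⟨e⟩ := h
  exact ⟨.of_addEquiv hM hM' e, .of_addEquiv hM' hM e.symm⟩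
end

section
/- Let M be a submonoid of the additive monoid ℚ₊ of nonnegative rational numbers that is difference-closed, and let F be a field. Then the monoid domain F[X;M] is an AP domain, i.e., every irreducible element of F[X;M] is prime. -/
/-!
Finitely many elements of `M` are natural multiples of a single `q ∈ M`: the subgroup of `ℚ`
they generate is cyclic, generated by its least positive element, which is a difference of two
elements of `M` and hence lies in `M`. So every finite subset of `F[X;M]` lies in the image of
the embedding `F[X] → F[X;M]`, `X ↦ X^q`. Units of `F[X;M]` are therefore constants, the
embeddings reflect irreducibility, and a relation `a * b = x * c` with `x` irreducible pulls back
to the UFD `F[X]`, where `x` is prime.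
-/

open Polynomial

lemma Rat.exists_closure_le_zmultiples_inv {S : Set ℚ} (hS : S.Finite) :
    ∃ d : ℕ, 0 < d ∧ AddSubgroup.closure S ≤ AddSubgroup.zmultiples (d : ℚ)⁻¹ := by
  refine ⟨∏ s ∈ hS.toFinset, s.den, Finset.prod_pos fun s _ => s.pos, ?_⟩
  rw [AddSubgroup.closure_le]
  intro s hs
  obtain ⟨k, hk⟩ : s.den ∣ ∏ s ∈ hS.toFinset, s.den :=
    Finset.dvd_prod_of_mem _ (hS.mem_toFinset.2 hs)
  have hk0 : (k : ℚ) ≠ 0 := Nat.cast_ne_zero.2 <| right_ne_zero_of_mul <|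
    hk ▸ (Finset.prod_pos fun (s : ℚ) _ => s.pos).ne'
  refine ⟨s.num * k, ?_⟩
  simp only [hk, zsmul_eq_mul]
  push_cast
  rw [mul_inv, mul_mul_mul_comm, mul_inv_cancel₀ hk0, mul_one, ← div_eq_mul_inv,
    Rat.num_div_den]

lemma Rat.disjoint_zmultiples_inv_Ioo {d : ℕ} (hd : 0 < d) :
    Disjoint (AddSubgroup.zmultiples (d : ℚ)⁻¹ : Set ℚ) (Set.Ioo 0 (d : ℚ)⁻¹) := by
  rw [Set.disjoint_left]
  rintro _ ⟨k, rfl⟩ ⟨hpos, hlt⟩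
  have hdinv : (0 : ℚ) < (d : ℚ)⁻¹ := by positivity
  simp only [zsmul_eq_mul] at hpos hlt
  have h1 : (0 : ℚ) < k := pos_of_mul_pos_left hpos hdinv.le
  have h2 : (k : ℚ) < 1 := by nlinarith
  norm_cast at h1 h2
  omega

lemma Rat.exists_pos_closure_eq_zmultiples {S : Set ℚ} (hS : S.Finite)
    (hne : ∃ s ∈ S, s ≠ 0) :
    ∃ q : ℚ, 0 < q ∧ AddSubgroup.closure S = AddSubgroup.zmultiples q := by
  obtain ⟨d, hd, hle⟩ := exists_closure_le_zmultiples_inv hS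
  have hbot : AddSubgroup.closure S ≠ ⊥ := by
    obtain ⟨s, hs, hs0⟩ := hne
    exact fun h => hs0 (by simpa [h] using AddSubgroup.subset_closure hs)
  obtain ⟨q, hq⟩ := AddSubgroup.exists_isLeast_pos hbot (by positivity)
    ((disjoint_zmultiples_inv_Ioo hd).mono_left hle)
  exact ⟨q, hq.1.2,
    (AddSubgroup.cyclic_of_min hq).trans (AddSubgroup.zmultiples_eq_closure q).symm⟩

lemma AddSubmonoid.exists_sub_eq_of_mem_closure {G : Type*} [AddCommGroup G] (M : AddSubmonoid G)
    {g : G} (hg : g ∈ AddSubgroup.closure (M : Set G)) : ∃ a ∈ M, ∃ b ∈ M, a - b = g := by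
  induction hg using AddSubgroup.closure_induction with
  | mem x hx => exact ⟨x, hx, 0, M.zero_mem, sub_zero x⟩
  | zero => exact ⟨0, M.zero_mem, 0, M.zero_mem, sub_zero 0⟩
  | add x y _ _ hx hy =>
    obtain ⟨a, ha, b, hb, rfl⟩ := hx
    obtain ⟨c, hc, e, he, rfl⟩ := hy
    exact ⟨a + c, M.add_mem ha hc, b + e, M.add_mem hb he, by abel⟩
  | neg x _ hx =>
    obtain ⟨a, ha, b, hb, rfl⟩ := hx
    exact ⟨b, hb, a, ha, (neg_sub a b).symm⟩

lemma AddSubmonoid.nsmul_left_injective {M : AddSubmonoid ℚ} {q : M} (hq : q ≠ 0) :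
    Function.Injective (· • q : ℕ → M) := fun m n h => by
  simpa [Subtype.ext_iff, hq] using h

lemma AddMonoidAlgebra.exists_ne_zero_mem_support_of_not_isUnit {F G : Type*} [DivisionRing F]
    [AddMonoid G] {x : AddMonoidAlgebra F G} (h0 : x ≠ 0) (hu : ¬IsUnit x) :
    ∃ g ∈ x.coeff.support, g ≠ 0 := by
  by_contra! h
  have hx : x = single 0 (x.coeff 0) := coeff_injective <|
    Finsupp.support_subset_singleton.1 fun g hg => Finset.mem_singleton.2 (h g hg)
  have hr : x.coeff 0 ≠ 0 := fun h' => h0 (by rw [hx, h', single_zero])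
  exact hu (hx ▸ hr.isUnit.map singleZeroRingHom)

section PolyOfMultiples

variable (R : Type*) [Semiring R] {M : Type*} [AddCommMonoid M]

/-- The substitution `X ↦ X^q`, identifying `R[X]` with the subring `R[X^q]` of `R[X;M]`. -/
noncomputable def polyOfMultiples (q : M) : R[X] →+* AddMonoidAlgebra R M :=
  (AddMonoidAlgebra.mapDomainRingHom R (multiplesHom M q)).comp (toFinsuppIso R).toRingHom

variable {R}

@[simp]
lemma polyOfMultiples_C (q : M) (r : R) :
    polyOfMultiples R q (C r) = AddMonoidAlgebra.single 0 r := by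
  simp [polyOfMultiples]

lemma polyOfMultiples_injective {q : M} (hq : Function.Injective (· • q : ℕ → M)) :
    Function.Injective (polyOfMultiples R q) :=
  (AddMonoidAlgebra.mapDomain_injective hq).comp (toFinsuppIso R).injective

lemma mem_range_polyOfMultiples {q : M} (hq : Function.Injective (· • q : ℕ → M))
    {x : AddMonoidAlgebra R M} (hx : ↑x.coeff.support ⊆ Set.range (· • q : ℕ → M)) :
    x ∈ Set.range (polyOfMultiples R q) :=
  ⟨(toFinsuppIso R).symm (AddMonoidAlgebra.comapDomain _ hq x), by
    simp only [polyOfMultiples, RingHom.coe_comp, Function.comp_apply, RingEquiv.toRingHom_eq_coe,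
      RingHom.coe_coe, RingEquiv.apply_symm_apply]
    exact AddMonoidAlgebra.mapDomain_comapDomain hx hq⟩

end PolyOfMultiples

namespace DifferenceClosed

variable {M : AddSubmonoid ℚ}

lemma mem_of_mem_closure_of_nonneg (hd : DifferenceClosed M) {g : ℚ}
    (hg : g ∈ AddSubgroup.closure (M : Set ℚ)) (h0 : 0 ≤ g) : g ∈ M := by
  obtain ⟨a, ha, b, hb, rfl⟩ := M.exists_sub_eq_of_mem_closure hg
  exact hd a ha b hb (sub_nonneg.1 h0)

lemma exists_ne_zero_subset_range_nsmul (hM : ∀ x ∈ M, 0 ≤ x) (hd : DifferenceClosed M)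
    {T : Set M} (hT : T.Finite) (hne : ∃ t ∈ T, t ≠ 0) :
    ∃ q : M, q ≠ 0 ∧ T ⊆ Set.range (· • q : ℕ → M) := by
  obtain ⟨q, hq0, hcl⟩ := Rat.exists_pos_closure_eq_zmultiples (hT.image (↑)) <| by
    obtain ⟨t, ht, ht0⟩ := hne
    exact ⟨t, Set.mem_image_of_mem _ ht, fun h => ht0 (Subtype.ext h)⟩
  have hTM : ((↑) '' T : Set ℚ) ⊆ M := Set.image_subset_iff.2 fun t _ => t.2
  have hqM : q ∈ M := hd.mem_of_mem_closure_of_nonneg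
    (AddSubgroup.closure_mono hTM (hcl ▸ AddSubgroup.mem_zmultiples q)) hq0.le
  refine ⟨⟨q, hqM⟩, fun h => hq0.ne' (congrArg Subtype.val h), fun t ht => ?_⟩
  obtain ⟨k, hk⟩ := AddSubgroup.mem_zmultiples_iff.1
    (hcl ▸ AddSubgroup.subset_closure (Set.mem_image_of_mem _ ht))
  have hk0 : 0 ≤ k := by
    have := hM t t.2
    rw [← hk, zsmul_eq_mul] at this
    exact Int.cast_nonneg_iff.1 (nonneg_of_mul_nonneg_left this hq0)
  lift k to ℕ using hk0
  exact ⟨k, Subtype.ext (by simpa using hk)⟩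

lemma exists_subset_range_polyOfMultiples (hM : ∀ x ∈ M, 0 ≤ x) (hd : DifferenceClosed M)
    (R : Type*) [Semiring R] {s : Set (AddMonoidAlgebra R M)} (hs : s.Finite) {m : M}
    (hm : m ≠ 0) : ∃ q : M, q ≠ 0 ∧ s ⊆ Set.range (polyOfMultiples R q) := by
  obtain ⟨q, hq, hT⟩ := hd.exists_ne_zero_subset_range_nsmul hM
    ((hs.biUnion fun y _ => y.coeff.support.finite_toSet).insert m) ⟨m, Set.mem_insert m _, hm⟩
  exact ⟨q, hq, fun y hy => mem_range_polyOfMultiples (AddSubmonoid.nsmul_left_injective hq)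
    fun t ht => hT (Set.mem_insert_of_mem _ (Set.mem_biUnion hy ht))⟩

lemma isLocalHom_polyOfMultiples (hM : ∀ x ∈ M, 0 ≤ x) (hd : DifferenceClosed M)
    (R : Type*) [CommSemiring R] [NoZeroDivisors R] {q : M} (hq : q ≠ 0) :
    IsLocalHom (polyOfMultiples R q) := by
  refine ⟨fun w hw => ?_⟩
  -- The unit and its inverse both come from one polynomial ring, where units are constants.
  obtain ⟨v, hv⟩ := hw.exists_right_inv
  obtain ⟨q', hq', hs⟩ := hd.exists_subset_range_polyOfMultiples hM R
    (s := {polyOfMultiples R q w, v}) (Set.toFinite _) hq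
  obtain ⟨u₀, hu₀⟩ := hs (Set.mem_insert _ _)
  obtain ⟨v₀, rfl⟩ := hs (Set.mem_insert_of_mem _ rfl)
  have hunit : IsUnit u₀ := IsUnit.of_mul_eq_one v₀ <|
    polyOfMultiples_injective (AddSubmonoid.nsmul_left_injective hq') (by simp [hu₀, hv])
  obtain ⟨r, -, rfl⟩ := Polynomial.isUnit_iff.1 hunit
  have hw : w = C r := polyOfMultiples_injective (AddSubmonoid.nsmul_left_injective hq)
    (by rw [← hu₀, polyOfMultiples_C, polyOfMultiples_C])
  exact hw ▸ hunit

end DifferenceClosed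

theorem ap_of_differenceClosed (M : AddSubmonoid ℚ)
    (hM : ∀ x ∈ M, (0 : ℚ) ≤ x) (hd : DifferenceClosed M)
    (F : Type*) [Field F] :
    ∀ x : AddMonoidAlgebra F M, Irreducible x → Prime x := by
  intro x hx
  obtain ⟨m, -, hm⟩ :=
    AddMonoidAlgebra.exists_ne_zero_mem_support_of_not_isUnit hx.ne_zero hx.not_isUnit
  refine ⟨hx.ne_zero, hx.not_isUnit, fun a b ⟨c, hc⟩ => ?_⟩
  obtain ⟨q, hq, hs⟩ := hd.exists_subset_range_polyOfMultiples hM F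
    (s := {x, a, b, c}) (Set.toFinite _) hm
  have := hd.isLocalHom_polyOfMultiples hM F hq
  obtain ⟨x₀, rfl⟩ := hs (by simp : x ∈ _)
  obtain ⟨a₀, rfl⟩ := hs (by simp : a ∈ _)
  obtain ⟨b₀, rfl⟩ := hs (by simp : b ∈ _)
  obtain ⟨c₀, rfl⟩ := hs (by simp : c ∈ _)
  have hx₀ : Prime x₀ := (Irreducible.of_map hx).prime
  have hdvd : x₀ ∣ a₀ * b₀ := ⟨c₀, polyOfMultiples_injective
    (AddSubmonoid.nsmul_left_injective hq) (by simpa only [map_mul] using hc)⟩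
  exact (hx₀.dvd_or_dvd hdvd).imp (map_dvd _) (map_dvd _)
end

section
/- Let F be a field of characteristic 0 and let M be a submonoid of the additive monoid ℚ₊ of nonnegative rational numbers. Suppose M contains an element π of height (0, 0, 0, …) such that π = m/n + 1/p, where p is a prime number, m and n are positive integers with gcd(m, n) = 1 and gcd(n, p) = 1 and n ≠ 1, and both m/n and 1/p belong to M. Then the element X^π − 1 of the monoid domain F[X;M] is irreducible but not prime. -/
/-- `a` is an element of `M` of height `(0,0,0,…)`: for every prime `p`
the equation `p·x = a` has no solution `x ∈ M`. -/
def IsHeightZero (M : AddSubmonoid ℚ) (a : ℚ) : Prop :=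
  ∀ p : ℕ, p.Prime → ¬ ∃ x ∈ M, (p : ℚ) * x = a

open Polynomial Finset AddMonoidAlgebra

section NewtonCore

variable {E : Type*} [CommRing E]

noncomputable def UU (R : Multiset E) : Polynomial E :=
  (R.map (fun r => 1 - Polynomial.C r * Polynomial.X)).prod

def SS (R : Multiset E) (j : ℕ) : E := (R.map (fun r => r ^ j)).sum

lemma UU_coeff_zero (R : Multiset E) : (UU R).coeff 0 = 1 := by
  induction R using Multiset.induction_on with
  | empty => simp [UU]
  | cons a R IH =>
    simp only [UU, Multiset.map_cons, Multiset.prod_cons] at *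
    rw [mul_coeff_zero, IH]
    simp

lemma newton (R : Multiset E) (k : ℕ) :
    ((k+1 : ℕ) : E) * (UU R).coeff (k+1)
      + ∑ j ∈ Finset.range (k+1), SS R (j+1) * (UU R).coeff (k - j) = 0 := by
  induction R using Multiset.induction_on generalizing k with
  | empty =>
    simp [UU, SS, Polynomial.coeff_one]
  | cons a R IH =>
    have hU : UU (a ::ₘ R) = UU R - C a * (X * UU R) := by
      simp only [UU, Multiset.map_cons, Multiset.prod_cons]; ring
    have hS : ∀ j, SS (a ::ₘ R) j = a ^ j + SS R j := by
      intro j; simp [SS, Multiset.map_cons, Multiset.sum_cons]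
    have hd0 : (X * UU R).coeff 0 = 0 := by simp [mul_coeff_zero]
    have hds : ∀ i, (X * UU R).coeff (i+1) = (UU R).coeff i := fun i => coeff_X_mul _ _
    have hcoeff : ∀ i, (UU (a ::ₘ R)).coeff i = (UU R).coeff i - a * (X * UU R).coeff i := by
      intro i; rw [hU]; simp [Polynomial.coeff_sub, coeff_C_mul]
    have H1 : ∑ j ∈ range (k+1), SS R (j+1) * (UU R).coeff (k - j)
        = -(((k+1 : ℕ) : E) * (UU R).coeff (k+1)) := by
      linear_combination IH k
    have H2 : ∑ j ∈ range (k+1), SS R (j+1) * (X * UU R).coeff (k - j)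
        = -(((k : ℕ) : E) * (UU R).coeff k) := by
      rw [Finset.sum_range_succ, Nat.sub_self, hd0, mul_zero, add_zero]
      cases k with
      | zero => simp
      | succ k' =>
        have he : ∀ j ∈ range (k'+1),
            SS R (j+1) * (X * UU R).coeff (k' + 1 - j) = SS R (j+1) * (UU R).coeff (k' - j) := by
          intro j hj
          have hj' : j ≤ k' := Nat.lt_succ_iff.mp (mem_range.mp hj)
          have h : k' + 1 - j = (k' - j) + 1 := by omega
          rw [h, hds]
        rw [Finset.sum_congr rfl he]
        linear_combination (norm := (push_cast; ring1)) IH k'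
    have H34 : ∑ j ∈ range (k+1), a^(j+1) * (UU R).coeff (k - j)
        - a * ∑ j ∈ range (k+1), a^(j+1) * (X * UU R).coeff (k - j)
        = a * (UU R).coeff k := by
      have hT4 : ∑ j ∈ range (k+1), a^(j+1) * (X * UU R).coeff (k - j)
          = ∑ j ∈ range k, a^(j+1) * (UU R).coeff (k - 1 - j) := by
        rw [Finset.sum_range_succ, Nat.sub_self, hd0, mul_zero, add_zero]
        refine Finset.sum_congr rfl fun j hj => ?_
        have hj' : j < k := mem_range.mp hj
        have h : k - j = (k - 1 - j) + 1 := by omega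
        rw [h, hds]
      have hT3 : ∑ j ∈ range (k+1), a^(j+1) * (UU R).coeff (k - j)
          = (∑ j ∈ range k, a^(j+1+1) * (UU R).coeff (k - (j+1))) + a^(0+1) * (UU R).coeff (k - 0) :=
        Finset.sum_range_succ' _ k
      rw [hT4, hT3]
      have he : ∀ j ∈ range k, a^(j+1+1) * (UU R).coeff (k - (j+1))
          = a * (a^(j+1) * (UU R).coeff (k - 1 - j)) := by
        intro j hj
        have h : k - (j+1) = k - 1 - j := by omega
        rw [h]; ring
      rw [Finset.sum_congr rfl he, ← Finset.mul_sum]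
      ring_nf
      simp
    have expand : ∑ j ∈ range (k+1), SS (a ::ₘ R) (j+1) * (UU (a ::ₘ R)).coeff (k - j)
        = (∑ j ∈ range (k+1), SS R (j+1) * (UU R).coeff (k - j))
          - a * (∑ j ∈ range (k+1), SS R (j+1) * (X * UU R).coeff (k - j))
          + ((∑ j ∈ range (k+1), a^(j+1) * (UU R).coeff (k - j))
          - a * (∑ j ∈ range (k+1), a^(j+1) * (X * UU R).coeff (k - j))) := by
      rw [Finset.mul_sum, Finset.mul_sum, ← Finset.sum_sub_distrib, ← Finset.sum_sub_distrib,
        ← Finset.sum_add_distrib]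
      refine Finset.sum_congr rfl fun j hj => ?_
      rw [hS, hcoeff]; ring
    rw [hcoeff, expand, H1, H2]
    rw [hds]
    linear_combination (norm := (push_cast; ring1)) H34

lemma gap_SS (R : Multiset E) {a : ℕ}
    (hgap : ∀ j, 0 < j → j < a → (UU R).coeff j = 0) :
    ∀ j, 0 < j → j < a → SS R j = 0 := by
  intro j
  induction j using Nat.strong_induction_on with
  | _ j IH =>
    intro hj0 hja
    obtain ⟨k, rfl⟩ : ∃ k, j = k + 1 := ⟨j - 1, by omega⟩
    have hN := newton R k
    rw [Finset.sum_range_succ, Nat.sub_self, UU_coeff_zero, mul_one] at hN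
    rw [hgap (k+1) hj0 hja, mul_zero, zero_add] at hN
    have hz : ∀ i ∈ range k, SS R (i+1) * (UU R).coeff (k - i) = 0 := by
      intro i hi
      have hik := mem_range.mp hi
      rw [IH (i+1) (by omega) (by omega) (by omega), zero_mul]
    rwa [Finset.sum_eq_zero hz, zero_add] at hN

lemma gap_SS_top (R : Multiset E) {a : ℕ} (ha : 0 < a)
    (hgap : ∀ j, 0 < j → j < a → (UU R).coeff j = 0) :
    SS R a = -((a : ℕ) : E) * (UU R).coeff a := by
  obtain ⟨k, rfl⟩ : ∃ k, a = k + 1 := ⟨a - 1, by omega⟩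
  have hN := newton R k
  rw [Finset.sum_range_succ, Nat.sub_self, UU_coeff_zero, mul_one] at hN
  have hz : ∀ i ∈ range k, SS R (i+1) * (UU R).coeff (k - i) = 0 := by
    intro i hi
    have hik := mem_range.mp hi
    rw [gap_SS R hgap (i+1) (by omega) (by omega), zero_mul]
  rw [Finset.sum_eq_zero hz, zero_add] at hN
  linear_combination hN

lemma minsupp_dvd_algclosed {E : Type*} [Field E] [IsAlgClosed E] [CharZero E]
    {K : ℕ} (hK : 0 < K) {f : Polynomial E} (hdvd : f ∣ X ^ K - 1)
    {a : ℕ} (ha : 0 < a) (hfa : f.coeff a ≠ 0)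
    (hmin : ∀ j, 0 < j → j < a → f.coeff j = 0) : a ∣ K := by
  obtain ⟨g, hg⟩ := hdvd
  have hfa' := hfa
  have hf0 : f ≠ 0 := fun h => hfa (by simp [h])
  have hfc0 : f.coeff 0 ≠ 0 := by
    intro h0
    have hXdvd : (X : Polynomial E) ∣ f := X_dvd_iff.mpr h0
    have hfd : f ∣ X ^ K - 1 := ⟨g, hg⟩
    obtain ⟨q, hq⟩ := hXdvd.trans hfd
    have h00 : (X ^ K - 1 : Polynomial E).coeff 0 = 0 := by
      rw [hq, mul_coeff_zero]; simp
    rw [Polynomial.coeff_sub, coeff_X_pow, if_neg (by omega : ¬ 0 = K)] at h00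
    simp at h00
  have hroot_pow : ∀ r : E, f.IsRoot r → r ^ K = 1 := by
    intro r hr
    have : (X ^ K - 1 : Polynomial E).eval r = 0 := by
      rw [hg, eval_mul, hr, zero_mul]
    simpa [sub_eq_zero] using this
  have hsplits : f.roots.card = f.natDegree := by
    rw [← splits_iff_card_roots]
    exact IsAlgClosed.splits f
  set R : Multiset E := f.roots.map (fun r => r⁻¹) with hR
  have hmemR : ∀ r ∈ R, r ^ K = 1 := by
    intro r hr
    rw [hR] at hr
    obtain ⟨s, hs, rfl⟩ := Multiset.mem_map.mp hr
    have hsK : s ^ K = 1 := hroot_pow s (isRoot_of_mem_roots hs)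
    rw [inv_pow, hsK, inv_one]
  have hprod : f = C (f.coeff 0) * UU R := by
    have h1 : C f.leadingCoeff * (f.roots.map fun r => X - C r).prod = f :=
      C_leadingCoeff_mul_prod_multiset_X_sub_C hsplits
    have h2 : (f.roots.map fun r => X - C r)
        = (f.roots.map fun r => C (-r) * (1 - C r⁻¹ * X)) := by
      apply Multiset.map_congr rfl
      intro r hr
      have hr0 : r ≠ 0 := by
        intro h
        have h2 := hroot_pow r (isRoot_of_mem_roots hr)
        rw [h, zero_pow hK.ne'] at h2
        exact zero_ne_one h2
      have hrr : (-r) * r⁻¹ = -1 := by field_simp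
      rw [mul_sub, mul_one, ← mul_assoc, ← C_mul, hrr]
      simp only [map_neg, map_one]
      ring
    have h3 : (f.roots.map fun r => C (-r) * (1 - C r⁻¹ * X)).prod
        = (f.roots.map fun r => C (-r)).prod * (f.roots.map fun r => 1 - C r⁻¹ * X).prod := by
      rw [← Multiset.prod_map_mul]
    have h4 : (f.roots.map fun r => 1 - C r⁻¹ * X).prod = UU R := by
      rw [hR, UU, Multiset.map_map]
      rfl
    have h5 : (f.roots.map fun r => C (-r)).prod = C ((f.roots.map fun r => -r).prod) := by
      rw [← Multiset.prod_hom _ (C : E →+* Polynomial E), Multiset.map_map]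
      rfl
    have hf : f = C (f.leadingCoeff * (f.roots.map fun r => -r).prod) * UU R := by
      rw [map_mul]
      conv_lhs => rw [← h1]
      rw [h2, h3, h4, h5]
      ring
    have hc0 : f.coeff 0 = f.leadingCoeff * (f.roots.map fun r => -r).prod := by
      conv_lhs => rw [hf]
      rw [coeff_C_mul, UU_coeff_zero, mul_one]
    rw [hc0]
    exact hf
  have hcoeffrel : ∀ j, f.coeff j = f.coeff 0 * (UU R).coeff j := by
    intro j
    conv_lhs => rw [hprod]
    rw [coeff_C_mul]
  have hgap : ∀ j, 0 < j → j < a → (UU R).coeff j = 0 := by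
    intro j hj0 hja
    have h := hmin j hj0 hja
    rw [hcoeffrel j] at h
    exact (mul_eq_zero.mp h).resolve_left hfc0
  have hUa : (UU R).coeff a ≠ 0 := by
    intro h; apply hfa; rw [hcoeffrel a, h, mul_zero]
  have hSa : SS R a ≠ 0 := by
    rw [gap_SS_top R ha hgap]
    exact mul_ne_zero (neg_ne_zero.mpr (Nat.cast_ne_zero.mpr ha.ne')) hUa
  by_contra hnd
  set d := Nat.gcd a K with hd
  have hd0 : 0 < d := Nat.gcd_pos_of_pos_left K ha
  have hdK : d ∣ K := Nat.gcd_dvd_right a K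
  have hda : d ∣ a := Nat.gcd_dvd_left a K
  have hdlt : d < a := by
    rcases Nat.lt_or_ge d a with h | h
    · exact h
    · exact absurd (le_antisymm (Nat.le_of_dvd ha hda) h ▸ hdK) hnd
  set m := K / d with hm
  set a' := a / d with ha'
  have hm0 : 0 < m := Nat.div_pos (Nat.le_of_dvd hK hdK) hd0
  have hmd : K = d * m := (Nat.mul_div_cancel' hdK).symm
  have had : a = d * a' := (Nat.mul_div_cancel' hda).symm
  have hcop : Nat.Coprime a' m := Nat.coprime_div_gcd_div_gcd hd0
  haveI : NeZero (K : E) := ⟨Nat.cast_ne_zero.mpr hK.ne'⟩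
  haveI : NeZero K := ⟨hK.ne'⟩
  obtain ⟨ω, hω⟩ := HasEnoughRootsOfUnity.exists_primitiveRoot E K
  have hωm : IsPrimitiveRoot (ω ^ d) m := hω.pow hK hmd
  have hlog : ∀ r ∈ R, ∃ i, ω ^ i = r := by
    intro r hr
    obtain ⟨i, _, hi⟩ := hω.eq_pow_of_pow_eq_one (hmemR r hr)
    exact ⟨i, hi⟩
  choose! L hL using hlog
  set Q : Polynomial ℚ := (R.map (fun r => (X : Polynomial ℚ) ^ (L r))).sum with hQdef
  have haev : ∀ z : E, aeval z Q = (R.map (fun r => z ^ (L r))).sum := by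
    intro z
    rw [hQdef, map_multiset_sum, Multiset.map_map]
    congr 1
    apply Multiset.map_congr rfl
    intro r _
    simp
  have h1 : aeval (ω ^ d) Q = SS R d := by
    rw [haev]
    apply congrArg Multiset.sum
    apply Multiset.map_congr rfl
    intro r hr
    calc (ω ^ d) ^ (L r) = (ω ^ (L r)) ^ d := by rw [← pow_mul, ← pow_mul, mul_comm]
    _ = r ^ d := by rw [hL r hr]
  have hQ0 : aeval (ω ^ d) Q = 0 := by rw [h1, gap_SS R hgap d hd0 hdlt]
  have hmp : minpoly ℚ (ω ^ d) ∣ Q := minpoly.dvd ℚ _ hQ0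
  rw [← cyclotomic_eq_minpoly_rat hωm hm0] at hmp
  obtain ⟨q, hq⟩ := hmp
  have hz : IsPrimitiveRoot ((ω ^ d) ^ a') m := hωm.pow_of_coprime a' hcop
  have hcz : aeval ((ω ^ d) ^ a') (cyclotomic m ℚ) = 0 := by
    rw [aeval_def, ← eval_map, map_cyclotomic]
    exact hz.isRoot_cyclotomic hm0
  have hQz : aeval ((ω ^ d) ^ a') Q = 0 := by rw [hq, map_mul, hcz, zero_mul]
  have h2 : aeval ((ω ^ d) ^ a') Q = SS R a := by
    rw [haev]
    apply congrArg Multiset.sum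
    apply Multiset.map_congr rfl
    intro r hr
    calc ((ω ^ d) ^ a') ^ (L r) = (ω ^ (L r)) ^ (d * a') := by
          rw [← pow_mul, ← pow_mul, ← pow_mul]; congr 1; ring
    _ = r ^ a := by rw [hL r hr, ← had]
  rw [hQz] at h2
  exact hSa h2.symm

lemma minsupp_dvd {F : Type*} [Field F] [CharZero F]
    {K : ℕ} (hK : 0 < K) {f : Polynomial F} (hdvd : f ∣ X ^ K - 1)
    {a : ℕ} (ha : 0 < a) (hfa : f.coeff a ≠ 0)
    (hmin : ∀ j, 0 < j → j < a → f.coeff j = 0) : a ∣ K := by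
  let E := AlgebraicClosure F
  haveI : CharZero E := charZero_of_injective_algebraMap (algebraMap F E).injective
  set φ := algebraMap F E with hφ
  have hinj : Function.Injective φ := φ.injective
  refine minsupp_dvd_algclosed (E := E) hK (f := f.map φ) ?_ ha ?_ ?_
  · have := Polynomial.map_dvd φ hdvd
    rwa [Polynomial.map_sub, Polynomial.map_pow, Polynomial.map_X, Polynomial.map_one] at this
  · rw [Polynomial.coeff_map]
    exact fun h => hfa (hinj (by rw [h, map_zero]))
  · intro j hj0 hja
    rw [Polynomial.coeff_map, hmin j hj0 hja, map_zero]

lemma X_pow_dvd_X_pow_sub_one {F : Type*} [Field F] {A B : ℕ} (hA : 0 < A) (hB : 0 < B)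
    (h : (X ^ A - 1 : Polynomial F) ∣ X ^ B - 1) : A ∣ B := by
  by_contra hnd
  have hr1 : 1 ≤ B % A := by
    rcases Nat.eq_zero_or_pos (B % A) with h0 | h0
    · exact absurd (Nat.dvd_of_mod_eq_zero h0) hnd
    · exact h0
  have hrA : B % A < A := Nat.mod_lt _ hA
  have h1 : (X ^ A - 1 : Polynomial F) ∣ (X ^ A) ^ (B / A) - 1 := by
    simpa using sub_dvd_pow_sub_pow (X ^ A : Polynomial F) 1 (B / A)
  have hXB : (X : Polynomial F) ^ B = (X ^ A) ^ (B / A) * X ^ (B % A) := by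
    rw [← pow_mul, ← pow_add, Nat.div_add_mod]
  have h2 : (X ^ B - 1 : Polynomial F)
      = ((X ^ A) ^ (B / A) - 1) * X ^ (B % A) + (X ^ (B % A) - 1) := by
    rw [hXB]; ring
  have h3 := dvd_sub h (h1.mul_right (X ^ (B % A)))
  rw [h2] at h3
  have hdvd2 : (X ^ A - 1 : Polynomial F) ∣ X ^ (B % A) - 1 := by simpa using h3
  have hne : (X ^ (B % A) - 1 : Polynomial F) ≠ 0 := by
    intro hh
    have h4 := congrArg (fun q => Polynomial.coeff q (B % A)) hh
    simp only [Polynomial.coeff_sub, coeff_X_pow, coeff_one, Polynomial.coeff_zero, if_pos rfl,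
      if_neg (by omega : ¬ B % A = 0)] at h4
    norm_num at h4
  have hdeg := Polynomial.natDegree_le_of_dvd hdvd2 hne
  have e1 : (X ^ A - 1 : Polynomial F) = X ^ A - C 1 := by rw [map_one]
  have e2 : (X ^ (B % A) - 1 : Polynomial F) = X ^ (B % A) - C 1 := by rw [map_one]
  rw [e1, e2, natDegree_X_pow_sub_C, natDegree_X_pow_sub_C] at hdeg
  omega

end NewtonCore

section Transfer

variable {F : Type*} [Field F] {M : AddSubmonoid ℚ}

/-- scaling-by-D embedding of exponents -/
noncomputable def scaleHom (M : AddSubmonoid ℚ) (D : ℕ) : M →+ ℚ :=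
  (AddMonoidHom.mulLeft (D : ℚ)).comp M.subtype

/-- F[X;M] → F[X;ℚ], X^x ↦ X^(D x) -/
noncomputable def PhiD (F : Type*) [Field F] (M : AddSubmonoid ℚ) (D : ℕ) :
    AddMonoidAlgebra F M →+* AddMonoidAlgebra F ℚ :=
  AddMonoidAlgebra.mapDomainRingHom F (scaleHom M D)

/-- F[X] → F[X;ℚ] canonical -/
noncomputable def Gam (F : Type*) [Field F] : Polynomial F →+* AddMonoidAlgebra F ℚ :=
  (AddMonoidAlgebra.mapDomainRingHom F (Nat.castAddMonoidHom ℚ)).comp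
    (Polynomial.toFinsuppIso F).toRingHom

lemma Gam_injective : Function.Injective (Gam F) := by
  exact (AddMonoidAlgebra.mapDomain_injective (R := F) Nat.cast_injective).comp
    (Polynomial.toFinsuppIso F).injective

lemma Gam_monomial (k : ℕ) (c : F) :
    Gam F (Polynomial.monomial k c) = AddMonoidAlgebra.single (k : ℚ) c := by
  simp only [Gam, RingHom.comp_apply, RingEquiv.toRingHom_eq_coe, RingHom.coe_coe,
    Polynomial.toFinsuppIso_apply, Polynomial.toFinsupp_monomial]
  exact AddMonoidAlgebra.mapDomain_single

lemma Gam_X_pow (k : ℕ) : Gam F (X ^ k) = AddMonoidAlgebra.single ((k : ℕ) : ℚ) (1 : F) := by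
  rw [X_pow_eq_monomial, Gam_monomial]

lemma Gam_support (P : Polynomial F) :
    (Gam F P).coeff.support = P.support.image (fun n : ℕ => (n : ℚ)) := by
  simp only [Gam, RingHom.comp_apply, RingEquiv.toRingHom_eq_coe, RingHom.coe_coe,
    Polynomial.toFinsuppIso_apply, AddMonoidAlgebra.mapDomainRingHom_apply]
  exact Finsupp.mapDomain_support_of_injective Nat.cast_injective P.toFinsupp.coeff

lemma Gam_exists (u : AddMonoidAlgebra F ℚ)
    (hu : ∀ x ∈ u.coeff.support, ∃ k : ℕ, ((k : ℕ) : ℚ) = x) :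
    ∃ P : Polynomial F, Gam F P = u := by
  have hsub : ↑u.coeff.support ⊆ Set.range (fun n : ℕ => (n : ℚ)) := by
    intro x hx
    obtain ⟨k, hk⟩ := hu x hx
    exact ⟨k, hk⟩
  refine ⟨(Polynomial.toFinsuppIso F).symm
    (AddMonoidAlgebra.ofCoeff (Finsupp.comapDomain _ u.coeff (Nat.cast_injective.injOn))), ?_⟩
  apply AddMonoidAlgebra.coeff_injective
  exact Finsupp.mapDomain_comapDomain _ Nat.cast_injective u.coeff hsub

lemma PhiD_single (D : ℕ) (x : M) (c : F) :
    PhiD F M D (AddMonoidAlgebra.single x c) = AddMonoidAlgebra.single ((D : ℚ) * (x : ℚ)) c := by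
  simp only [PhiD, AddMonoidAlgebra.mapDomainRingHom_apply]
  exact AddMonoidAlgebra.mapDomain_single

lemma scaleHom_injective (D : ℕ) (hD : 0 < D) : Function.Injective (scaleHom M D) := by
  intro x y hxy
  simp only [scaleHom, AddMonoidHom.comp_apply, AddMonoidHom.coe_mulLeft,
    AddSubmonoid.coe_subtype] at hxy
  have hD' : (D : ℚ) ≠ 0 := Nat.cast_ne_zero.mpr hD.ne'
  exact Subtype.ext (mul_left_cancel₀ hD' hxy)

lemma PhiD_support (D : ℕ) (hD : 0 < D) (u : AddMonoidAlgebra F M) :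
    (PhiD F M D u).coeff.support = u.coeff.support.image (fun x : M => (D : ℚ) * (x : ℚ)) := by
  simp only [PhiD, AddMonoidAlgebra.mapDomainRingHom_apply]
  exact Finsupp.mapDomain_support_of_injective (scaleHom_injective D hD) u.coeff

variable {F : Type*} [Field F] {M : AddSubmonoid ℚ}

noncomputable def eps (F : Type*) [Field F] (M : AddSubmonoid ℚ) :
    AddMonoidAlgebra F M →ₐ[F] F := AddMonoidAlgebra.lift F F M 1

lemma eps_single (x : M) (c : F) : eps F M (AddMonoidAlgebra.single x c) = c := by
  rw [eps, AddMonoidAlgebra.lift_single]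
  simp

lemma isUnit_single_zero {c : F} (hc : c ≠ 0) :
    IsUnit (AddMonoidAlgebra.single (0 : M) c : AddMonoidAlgebra F M) := by
  have h : (AddMonoidAlgebra.single (0 : M) c : AddMonoidAlgebra F M)
      = (AddMonoidAlgebra.singleZeroRingHom : F →+* AddMonoidAlgebra F M) c := rfl
  rw [h]
  exact (isUnit_iff_ne_zero.mpr hc).map _

lemma exists_ne_zero_support {u : AddMonoidAlgebra F M} (hu : u ≠ 0) (hnu : ¬ IsUnit u) :
    ∃ x ∈ u.coeff.support, x ≠ (0 : M) := by
  by_contra h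
  push_neg at h
  have hsub : u.coeff.support ⊆ {0} := fun x hx => Finset.mem_singleton.mpr (h x hx)
  have heq : u = AddMonoidAlgebra.single 0 (u.coeff 0) :=
    AddMonoidAlgebra.coeff_injective (Finsupp.support_subset_singleton.mp hsub)
  apply hnu
  rw [heq]
  apply isUnit_single_zero (M := M)
  intro h0
  apply hu
  rw [heq, h0, AddMonoidAlgebra.single_zero]

lemma exists_D (s : Finset M) : ∃ D : ℕ, 0 < D ∧
    ∀ x : M, x ∈ s → (0:ℚ) ≤ (x:ℚ) → ∃ k : ℕ, ((k : ℕ) : ℚ) = (D : ℚ) * (x : ℚ) := by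
  refine ⟨s.prod (fun x => (x : ℚ).den), Finset.prod_pos (fun x _ => (x : ℚ).pos), ?_⟩
  intro x hx hx0
  have hdvd : (x : ℚ).den ∣ s.prod (fun x => (x : ℚ).den) := Finset.dvd_prod_of_mem _ hx
  obtain ⟨c, hc⟩ := hdvd
  have hnum0 : 0 ≤ (x : ℚ).num := Rat.num_nonneg.mpr hx0
  refine ⟨c * (x : ℚ).num.toNat, ?_⟩
  have hden0 : (((x : ℚ).den : ℕ) : ℚ) ≠ 0 := Nat.cast_ne_zero.mpr (x : ℚ).den_nz
  have hnum : (((x : ℚ).num : ℤ) : ℚ) = (x : ℚ) * ((x : ℚ).den : ℚ) :=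
    (div_eq_iff hden0).mp (Rat.num_div_den (x : ℚ))
  have h1 : ((((x : ℚ).num.toNat : ℕ)) : ℚ) = (((x : ℚ).num : ℤ) : ℚ) := by
    exact_mod_cast Int.toNat_of_nonneg hnum0
  rw [hc]
  push_cast
  rw [h1, hnum]
  ring

lemma exists_poly {F : Type*} [Field F] {M : AddSubmonoid ℚ} (u : AddMonoidAlgebra F M)
    (D : ℕ) (hD : 0 < D)
    (hu : ∀ x : M, x ∈ u.coeff.support → ∃ k : ℕ, ((k : ℕ) : ℚ) = (D : ℚ) * (x : ℚ)) :
    ∃ P : Polynomial F, Gam F P = PhiD F M D u := by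
  apply Gam_exists
  intro y hy
  rw [PhiD_support D hD] at hy
  obtain ⟨x, hx, rfl⟩ := Finset.mem_image.mp hy
  exact hu x hx

end Transfer
theorem binomial_irreducible_not_prime (M : AddSubmonoid ℚ)
    (hM : ∀ x ∈ M, (0 : ℚ) ≤ x)
    (F : Type*) [Field F] [CharZero F]
    (m n p : ℕ) (hp : p.Prime) (hm : 0 < m) (hn : 0 < n) (hn1 : n ≠ 1)
    (hmn : Nat.Coprime m n) (hnp : Nat.Coprime n p)
    (h1 : (m : ℚ) / (n : ℚ) ∈ M) (h2 : (1 : ℚ) / (p : ℚ) ∈ M)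
    (hht : IsHeightZero M ((m : ℚ) / (n : ℚ) + (1 : ℚ) / (p : ℚ))) :
    Irreducible
        (AddMonoidAlgebra.of' F M
            ⟨(m : ℚ) / (n : ℚ) + (1 : ℚ) / (p : ℚ), M.add_mem h1 h2⟩ - 1) ∧
      ¬ Prime
        (AddMonoidAlgebra.of' F M
            ⟨(m : ℚ) / (n : ℚ) + (1 : ℚ) / (p : ℚ), M.add_mem h1 h2⟩ - 1) := by
  have hp2 : 2 ≤ p := hp.two_le
  have hn2 : 2 ≤ n := by omega
  have hp0 : (p : ℚ) ≠ 0 := Nat.cast_ne_zero.mpr (by omega)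
  have hn0 : (n : ℚ) ≠ 0 := Nat.cast_ne_zero.mpr (by omega)
  set π : ℚ := (m : ℚ) / (n : ℚ) + (1 : ℚ) / (p : ℚ) with hπdef
  set πM : M := ⟨π, M.add_mem h1 h2⟩ with hπMdef
  set ξ : AddMonoidAlgebra F M := AddMonoidAlgebra.of' F M πM - 1 with hξdef
  have hπpos : 0 < π := by
    rw [hπdef]
    have ha : (0:ℚ) < 1 / (p:ℚ) := by
      have : (0:ℚ) < (p:ℚ) := by exact_mod_cast hp.pos
      positivity
    have hb : (0:ℚ) ≤ (m : ℚ) / (n : ℚ) := by positivity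
    linarith
  set N : ℕ := m * p + n with hNdef
  have hN4 : 4 ≤ N := by
    have hmp : 2 ≤ m * p := le_trans hp2 (Nat.le_mul_of_pos_left p hm)
    omega
  have hπeq : π * ((n : ℚ) * (p : ℚ)) = (N : ℚ) := by
    rw [hπdef, hNdef]
    push_cast
    field_simp
  have h1M : (1 : ℚ) ∈ M := by
    have hsm := AddSubmonoid.nsmul_mem M h2 p
    rwa [nsmul_eq_mul, mul_one_div, div_self hp0] at hsm
  set oneM : M := ⟨1, h1M⟩ with honeM
  have hcop1 : Nat.Coprime N n := by
    have hmpn : Nat.Coprime (m * p) n := Nat.Coprime.mul hmn hnp.symm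
    have h' : Nat.Coprime (m * p + n * 1) n := (Nat.coprime_add_mul_left_left (m * p) n 1).mpr hmpn
    have he : m * p + n * 1 = N := by rw [hNdef]; ring
    rwa [he] at h'
  have hcop2 : Nat.Coprime N p := by
    have h' : Nat.Coprime (n + p * m) p := (Nat.coprime_add_mul_left_left n p m).mpr hnp
    have he : n + p * m = N := by rw [hNdef]; ring
    rwa [he] at h'
  have hcopN : Nat.Coprime N (n * p) := Nat.Coprime.mul_right hcop1 hcop2
  have hepsXi : eps F M ξ = 0 := by
    rw [hξdef, AddMonoidAlgebra.of'_apply, map_sub, map_one, eps_single]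
    ring
  have hξnu : ¬ IsUnit ξ := by
    intro hu
    have hz := hu.map (eps F M)
    rw [hepsXi] at hz
    exact not_isUnit_zero hz
  have hπM0 : πM ≠ 0 := by
    intro h
    exact hπpos.ne' (congrArg Subtype.val h)
  have hξcoeff : ξ.coeff πM = 1 := by
    rw [hξdef, AddMonoidAlgebra.of'_apply, AddMonoidAlgebra.one_def, AddMonoidAlgebra.coeff_sub,
      AddMonoidAlgebra.coeff_single, AddMonoidAlgebra.coeff_single, Finsupp.sub_apply,
      Finsupp.single_eq_same, Finsupp.single_eq_of_ne' (Ne.symm hπM0)]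
    ring
  have hξne : ξ ≠ 0 := by
    intro h
    rw [h] at hξcoeff
    simp at hξcoeff
  have hPhiXi : ∀ D : ℕ, PhiD F M D ξ = AddMonoidAlgebra.single ((D : ℚ) * π) (1 : F) - 1 := by
    intro D
    rw [hξdef, map_sub, map_one, AddMonoidAlgebra.of'_apply, PhiD_single]
  have hGamBin : ∀ K : ℕ, Gam F ((X : Polynomial F) ^ K - 1)
      = AddMonoidAlgebra.single ((K : ℕ) : ℚ) (1 : F) - 1 := by
    intro K
    rw [map_sub, map_one, Gam_X_pow]
  -- KEY 2 : ¬ ξ ∣ of' oneM - 1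
  have hKey2 : ¬ ξ ∣ (AddMonoidAlgebra.of' F M oneM - 1) := by
    intro hdvd
    obtain ⟨h, hh⟩ := hdvd
    obtain ⟨D, hD0, hDspec⟩ := exists_D (insert πM h.coeff.support)
    obtain ⟨K, hK⟩ := hDspec πM (Finset.mem_insert_self _ _) (le_of_lt hπpos)
    have hK0 : 0 < K := by
      have hq : (0 : ℚ) < (K : ℚ) := by
        rw [hK]
        have hD' : (0:ℚ) < (D:ℚ) := by exact_mod_cast hD0
        exact mul_pos hD' hπpos
      exact_mod_cast hq
    obtain ⟨P, hP⟩ := exists_poly h D hD0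
      (fun x hx => hDspec x (Finset.mem_insert_of_mem hx) (hM _ x.2))
    have hz1 : PhiD F M D (AddMonoidAlgebra.of' F M oneM - 1)
        = AddMonoidAlgebra.single ((D : ℕ) : ℚ) (1 : F) - 1 := by
      rw [map_sub, map_one, AddMonoidAlgebra.of'_apply, PhiD_single]
      norm_num
    have heq : Gam F (((X : Polynomial F) ^ K - 1) * P) = Gam F ((X : Polynomial F) ^ D - 1) := by
      calc Gam F (((X : Polynomial F) ^ K - 1) * P)
          = (AddMonoidAlgebra.single ((K : ℕ) : ℚ) (1 : F) - 1) * PhiD F M D h := by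
            rw [map_mul, hGamBin K, hP]
        _ = PhiD F M D ξ * PhiD F M D h := by rw [hPhiXi D, hK]
        _ = PhiD F M D (ξ * h) := (map_mul _ _ _).symm
        _ = PhiD F M D (AddMonoidAlgebra.of' F M oneM - 1) := by rw [← hh]
        _ = Gam F ((X : Polynomial F) ^ D - 1) := by rw [hz1, hGamBin D]
    have heq2 : ((X : Polynomial F) ^ K - 1) * P = (X : Polynomial F) ^ D - 1 :=
      Gam_injective heq
    have hKD : K ∣ D := X_pow_dvd_X_pow_sub_one hK0 hD0 ⟨P, heq2.symm⟩
    have hKnp : K * (n * p) = D * N := by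
      have hq : (K : ℚ) * ((n : ℚ) * (p : ℚ)) = (D : ℚ) * (N : ℚ) := by
        rw [hK, mul_assoc, hπeq]
      exact_mod_cast hq
    obtain ⟨c, hc⟩ := hKD
    have hnpc : n * p = c * N := by
      have h3 : K * (n * p) = K * (c * N) := by rw [hKnp, hc]; ring
      exact Nat.eq_of_mul_eq_mul_left hK0 h3
    have hN1 : N = 1 := hcopN.eq_one_of_dvd ⟨c, by rw [hnpc]; ring⟩
    omega
  -- KEY 3 : ξ ∣ geom_sum * (of' oneM - 1)
  have hzN : (AddMonoidAlgebra.of' F M πM) ^ (n * p)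
      = (AddMonoidAlgebra.of' F M oneM) ^ N := by
    rw [AddMonoidAlgebra.of'_apply, AddMonoidAlgebra.of'_apply,
      AddMonoidAlgebra.single_pow, AddMonoidAlgebra.single_pow, one_pow, one_pow]
    have hcoe : ∀ (k : ℕ) (x : M), (((k • x : M)) : ℚ) = (k : ℚ) * (x : ℚ) := by
      intro k x
      induction k with
      | zero => simp
      | succ k ih =>
        rw [succ_nsmul, AddSubmonoid.coe_add, ih]
        push_cast
        ring
    congr 1
    apply Subtype.ext
    rw [hcoe, hcoe]
    show ((n * p : ℕ) : ℚ) * π = (N : ℚ) * (1 : ℚ)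
    push_cast
    rw [mul_one, mul_comm]
    rw [← hπeq]
  have hKey3 : ξ ∣ (∑ i ∈ Finset.range N, (AddMonoidAlgebra.of' F M oneM) ^ i)
      * (AddMonoidAlgebra.of' F M oneM - 1) := by
    rw [geom_sum_mul, ← hzN]
    have hd := sub_dvd_pow_sub_pow (AddMonoidAlgebra.of' F M πM) 1 (n * p)
    rw [one_pow] at hd
    exact hd
  -- eps of geom sum
  have hepsGeom : eps F M (∑ i ∈ Finset.range N, (AddMonoidAlgebra.of' F M oneM) ^ i) = N := by
    rw [map_sum]
    have hterm : ∀ i ∈ Finset.range N, eps F M ((AddMonoidAlgebra.of' F M oneM) ^ i) = 1 := by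
      intro i _
      rw [map_pow, AddMonoidAlgebra.of'_apply, eps_single, one_pow]
    rw [Finset.sum_congr rfl hterm, Finset.sum_const, Finset.card_range, nsmul_eq_mul, mul_one]
  -- not prime
  have hNotPrime : ¬ Prime ξ := by
    intro hPr
    rcases hPr.2.2 _ _ hKey3 with hcase | hcase
    · obtain ⟨w, hw⟩ := hcase
      have hNz : ((N : ℕ) : F) = 0 := by
        rw [hepsGeom.symm, hw, map_mul, hepsXi, zero_mul]
      have : (N : ℕ) ≠ 0 := by omega
      exact (Nat.cast_ne_zero (R := F)).mpr this hNz
    · exact hKey2 hcase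
  -- irreducible
  have hIrr : Irreducible ξ := by
    refine ⟨hξnu, ?_⟩
    intro f g hfg
    by_contra hcon
    push_neg at hcon
    obtain ⟨hf, hg⟩ := hcon
    have hf0 : f ≠ 0 := by
      rintro rfl
      rw [zero_mul] at hfg
      exact hξne hfg
    have hg0 : g ≠ 0 := by
      rintro rfl
      rw [mul_zero] at hfg
      exact hξne hfg
    obtain ⟨x₀, hx₀mem, hx₀⟩ := exists_ne_zero_support hf0 hf
    obtain ⟨y₀, hy₀mem, hy₀⟩ := exists_ne_zero_support hg0 hg
    obtain ⟨D, hD0, hDspec⟩ := exists_D (f.coeff.support ∪ g.coeff.support)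
    have hDpos : (0:ℚ) < (D:ℚ) := by exact_mod_cast hD0
    obtain ⟨P, hP⟩ := exists_poly f D hD0
      (fun x hx => hDspec x (Finset.mem_union_left _ hx) (hM _ x.2))
    obtain ⟨Q, hQ⟩ := exists_poly g D hD0
      (fun x hx => hDspec x (Finset.mem_union_right _ hx) (hM _ x.2))
    have heqPQ : Gam F (P * Q) = AddMonoidAlgebra.single ((D : ℚ) * π) (1 : F) - 1 := by
      rw [map_mul, hP, hQ, ← map_mul, ← hfg, hPhiXi]
    have hDπ0 : (D : ℚ) * π ≠ 0 := (mul_pos hDpos hπpos).ne'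
    have hmemDπ : ((D : ℚ) * π) ∈ (Gam F (P * Q)).coeff.support := by
      rw [heqPQ, Finsupp.mem_support_iff, AddMonoidAlgebra.one_def, AddMonoidAlgebra.coeff_sub,
        AddMonoidAlgebra.coeff_single, AddMonoidAlgebra.coeff_single, Finsupp.sub_apply,
        Finsupp.single_eq_same, Finsupp.single_eq_of_ne' (Ne.symm hDπ0)]
      norm_num
    rw [Gam_support] at hmemDπ
    obtain ⟨K, hKsupp, hK⟩ := Finset.mem_image.mp hmemDπ
    have hK0 : 0 < K := by
      have hq : (0 : ℚ) < (K : ℚ) := by rw [hK]; exact mul_pos hDpos hπpos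
      exact_mod_cast hq
    have heq2 : P * Q = (X : Polynomial F) ^ K - 1 := by
      apply Gam_injective
      rw [heqPQ, hGamBin, hK]
    have hXK0 : ((X : Polynomial F) ^ K - 1) ≠ 0 := by
      intro hcontra
      have hcc := congrArg (fun q => Polynomial.coeff q K) hcontra
      simp only [Polynomial.coeff_sub, coeff_X_pow, if_pos rfl, coeff_one,
        if_neg hK0.ne', Polynomial.coeff_zero] at hcc
      norm_num at hcc
    have hP0 : P ≠ 0 := by
      rintro rfl
      rw [zero_mul] at heq2
      exact hXK0 heq2.symm
    have hQ0 : Q ≠ 0 := by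
      rintro rfl
      rw [mul_zero] at heq2
      exact hXK0 heq2.symm
    have hdegs : P.natDegree + Q.natDegree = K := by
      have hnd := Polynomial.natDegree_mul hP0 hQ0
      rw [heq2] at hnd
      have he1 : ((X : Polynomial F) ^ K - 1) = (X : Polynomial F) ^ K - C 1 := by rw [map_one]
      rw [he1, natDegree_X_pow_sub_C] at hnd
      exact hnd.symm
    -- Q nonconstant
    have hQdeg : 1 ≤ Q.natDegree := by
      have hy' : ((D : ℚ) * (y₀ : ℚ)) ∈ (Gam F Q).coeff.support := by
        rw [hQ, PhiD_support D hD0]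
        exact Finset.mem_image_of_mem _ hy₀mem
      rw [Gam_support] at hy'
      obtain ⟨j, hj, hjeq⟩ := Finset.mem_image.mp hy'
      have hy0pos : (0:ℚ) < (y₀ : ℚ) :=
        lt_of_le_of_ne (hM _ y₀.2) (fun hcc => hy₀ (Subtype.ext hcc.symm))
      have hj0 : 0 < j := by
        have hq : (0:ℚ) < (j : ℚ) := by rw [hjeq]; exact mul_pos hDpos hy0pos
        exact_mod_cast hq
      exact le_trans hj0 (Polynomial.le_natDegree_of_mem_supp j hj)
    -- min positive support of P
    have hAne : ∃ i ∈ P.support, 0 < i := by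
      have hx' : ((D : ℚ) * (x₀ : ℚ)) ∈ (Gam F P).coeff.support := by
        rw [hP, PhiD_support D hD0]
        exact Finset.mem_image_of_mem _ hx₀mem
      rw [Gam_support] at hx'
      obtain ⟨i, hi, hieq⟩ := Finset.mem_image.mp hx'
      have hx0pos : (0:ℚ) < (x₀ : ℚ) :=
        lt_of_le_of_ne (hM _ x₀.2) (fun hcc => hx₀ (Subtype.ext hcc.symm))
      have hi0 : 0 < i := by
        have hq : (0:ℚ) < (i : ℚ) := by rw [hieq]; exact mul_pos hDpos hx0pos
        exact_mod_cast hq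
      exact ⟨i, hi, hi0⟩
    obtain ⟨i₀, hi₀P, hi₀0⟩ := hAne
    set A : Finset ℕ := P.support.filter (fun i => 0 < i) with hAdef
    have hAne' : A.Nonempty := ⟨i₀, Finset.mem_filter.mpr ⟨hi₀P, hi₀0⟩⟩
    set a : ℕ := A.min' hAne' with hadef
    have haA : a ∈ A := Finset.min'_mem _ _
    have haP : a ∈ P.support := (Finset.mem_filter.mp haA).1
    have ha0 : 0 < a := (Finset.mem_filter.mp haA).2
    have hminP : ∀ j', 0 < j' → j' < a → P.coeff j' = 0 := by
      intro j' hj'0 hj'a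
      by_contra hne
      have hj'A : j' ∈ A :=
        Finset.mem_filter.mpr ⟨Polynomial.mem_support_iff.mpr hne, hj'0⟩
      exact absurd (Finset.min'_le A j' hj'A) (by omega)
    have haK : a ∣ K :=
      minsupp_dvd hK0 ⟨Q, heq2.symm⟩ ha0 (Polynomial.mem_support_iff.mp haP) hminP
    have haltK : a < K := by
      have hle := Polynomial.le_natDegree_of_mem_supp a haP
      omega
    -- extract σ
    have hasupp : ((a : ℕ) : ℚ) ∈ (Gam F P).coeff.support := by
      rw [Gam_support]
      exact Finset.mem_image_of_mem _ haP
    rw [hP, PhiD_support D hD0] at hasupp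
    obtain ⟨σ, hσf, hσeq⟩ := Finset.mem_image.mp hasupp
    obtain ⟨t, ht⟩ := haK
    have ht2 : 2 ≤ t := by
      rcases Nat.lt_or_ge t 2 with h' | h'
      · interval_cases t <;> omega
      · exact h'
    have hqp := Nat.minFac_prime (show t ≠ 1 by omega)
    have hxmem : ((t / t.minFac) • (σ : ℚ)) ∈ M := AddSubmonoid.nsmul_mem M σ.2 _
    apply hht t.minFac hqp
    refine ⟨(t / t.minFac) • (σ : ℚ), hxmem, ?_⟩
    have hπσ : π = (t : ℚ) * (σ : ℚ) := by
      have hD' : (D : ℚ) ≠ 0 := hDpos.ne'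
      apply mul_left_cancel₀ hD'
      have hKQ : (K : ℚ) = (D : ℚ) * π := hK
      rw [← hKQ]
      rw [show ((K:ℕ):ℚ) = ((a * t : ℕ) : ℚ) by rw [← ht]]
      push_cast
      rw [← hσeq]
      ring
    rw [nsmul_eq_mul, ← mul_assoc]
    rw [show ((t.minFac : ℕ) : ℚ) * ((t / t.minFac : ℕ) : ℚ) = ((t : ℕ) : ℚ) by
      exact_mod_cast congrArg (fun z : ℕ => (z : ℚ)) (Nat.mul_div_cancel' t.minFac_dvd)]
    exact hπσ.symm
  exact ⟨hIrr, hNotPrime⟩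
end

section
/- Let M be a submonoid of the additive monoid ℚ₊ of nonnegative rational numbers that is not isomorphic as an additive monoid to ℕ₀ = {0, 1, 2, …}, and let F be a field. Then for a ∈ M, the monomial X^a is irreducible in the monoid domain F[X;M] if and only if a is an essential generator of M; moreover, whenever X^a is irreducible it is not prime. -/
/-- `a` is an essential generator of `M ⊆ ℚ₊`: the submonoid generated by
`M ∖ {a}` is not all of `M`. -/
def IsEssentialGenerator (M : AddSubmonoid ℚ) (a : ℚ) : Prop :=
  a ∈ M ∧ AddSubmonoid.closure ((M : Set ℚ) \ {a}) ≠ M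

/-!
In `F[X;M]` the least and the greatest exponent of a product are the sums of those of the
factors, because `M` is a linearly ordered cancellative monoid. A monomial has only one exponent,
so all its factors are monomials: `X^a` is irreducible exactly when `a` is an atom of `M`, and
since `M ⊆ ℚ₊` has no nonzero units, the atoms are exactly the essential generators.
If `X^a` were prime, then for each nonzero `x ∈ M` write `q x = p a` with `p ≥ 1`; then
`X^a ∣ X^(q x) = (X^x)^q`, so `X^a ∣ X^x`, i.e. `x - a ∈ M`. Subtracting `a` repeatedly shows
`M = ℕ a ≅ ℕ₀`.
-/

open AddMonoidAlgebra

namespace AddMonoidAlgebra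

variable {R M : Type*}

theorem ne_zero_of_prime_single_one [CommSemiring R] [AddCommMonoid M] {a : M}
    (hpr : Prime (single a 1 : R[M])) : a ≠ 0 := by
  rintro rfl
  rw [← one_def] at hpr
  exact not_prime_one hpr

section Semiring

variable [Semiring R] [AddCommMonoid M] [LinearOrder M] [IsOrderedCancelAddMonoid M]

theorem coeff_mul_add_of_forall_le {p q : R[M]} {b c : M}
    (hb : ∀ x ∈ p.coeff.support, x ≤ b) (hc : ∀ y ∈ q.coeff.support, y ≤ c) :
    (p * q).coeff (b + c) = p.coeff b * q.coeff c :=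
  coeff_mul_add_of_uniqueAdd fun _ _ hx hy h ↦
    (add_eq_add_iff_eq_and_eq (hb _ hx) (hc _ hy)).mp h

theorem coeff_mul_add_of_forall_ge {p q : R[M]} {b c : M}
    (hb : ∀ x ∈ p.coeff.support, b ≤ x) (hc : ∀ y ∈ q.coeff.support, c ≤ y) :
    (p * q).coeff (b + c) = p.coeff b * q.coeff c :=
  coeff_mul_add_of_uniqueAdd fun _ _ hx hy h ↦
    ((add_eq_add_iff_eq_and_eq (hb _ hx) (hc _ hy)).mp h.symm).imp Eq.symm Eq.symm

end Semiring

variable [CommSemiring R] [NoZeroDivisors R]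
  [AddCommMonoid M] [LinearOrder M] [IsOrderedCancelAddMonoid M]

theorem exists_eq_single_of_mul_eq_single {p q : R[M]} {a : M} {r : R} (hr : r ≠ 0)
    (h : p * q = single a r) : ∃ b s, p = single b s := by
  have support_nonempty {f g : R[M]} (h : f * g = single a r) : f.coeff.support.Nonempty := by
    rw [Finsupp.support_nonempty_iff, Ne, coeff_eq_zero]
    rintro rfl
    exact hr (single_eq_zero.mp (h.symm.trans (zero_mul g)))
  have hp := support_nonempty h
  have hq := support_nonempty ((mul_comm q p).trans h)
  have eq_of_ne_zero {x : M} (hx : (p * q).coeff x ≠ 0) : x = a := by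
    rw [h, coeff_single] at hx
    exact (Finsupp.single_apply_ne_zero.mp hx).1
  have hmax : p.coeff.support.max' hp + q.coeff.support.max' hq = a := by
    refine eq_of_ne_zero ?_
    rw [coeff_mul_add_of_forall_le (fun x hx ↦ Finset.le_max' _ x hx)
      (fun y hy ↦ Finset.le_max' _ y hy)]
    exact mul_ne_zero (Finsupp.mem_support_iff.mp (Finset.max'_mem _ _))
      (Finsupp.mem_support_iff.mp (Finset.max'_mem _ _))
  have hmin : p.coeff.support.min' hp + q.coeff.support.min' hq = a := by
    refine eq_of_ne_zero ?_
    rw [coeff_mul_add_of_forall_ge (fun x hx ↦ Finset.min'_le _ x hx)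
      (fun y hy ↦ Finset.min'_le _ y hy)]
    exact mul_ne_zero (Finsupp.mem_support_iff.mp (Finset.min'_mem _ _))
      (Finsupp.mem_support_iff.mp (Finset.min'_mem _ _))
  have hminmax : p.coeff.support.min' hp = p.coeff.support.max' hp :=
    ((add_eq_add_iff_eq_and_eq (Finset.min'_le_max' _ hp) (Finset.min'_le_max' _ hq)).mp
      (hmin.trans hmax.symm)).1
  have hsupp : p.coeff.support = {p.coeff.support.max' hp} :=
    Finset.eq_singleton_iff_unique_mem.mpr ⟨Finset.max'_mem _ _, fun x hx ↦
      le_antisymm (Finset.le_max' _ x hx) (hminmax ▸ Finset.min'_le _ x hx)⟩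
  exact ⟨_, _, coeff_injective (Finsupp.support_eq_singleton.mp hsupp).2⟩

theorem exists_single_mul_single_of_mul_eq_single {p q : R[M]} {a : M} {r : R} (hr : r ≠ 0)
    (h : p * q = single a r) :
    ∃ b c s t, p = single b s ∧ q = single c t ∧ b + c = a ∧ s * t = r := by
  obtain ⟨b, s, rfl⟩ := exists_eq_single_of_mul_eq_single hr h
  obtain ⟨c, t, rfl⟩ := exists_eq_single_of_mul_eq_single hr ((mul_comm _ _).trans h)
  rw [single_mul_single, single_inj] at h
  exact ⟨b, c, s, t, rfl, rfl, h.resolve_right fun h ↦ hr h.2⟩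

variable [Nontrivial R]

theorem isUnit_single_iff {b : M} {s : R} :
    IsUnit (single b s : R[M]) ↔ IsAddUnit b ∧ IsUnit s := by
  constructor
  · intro hu
    obtain ⟨q, hq⟩ := hu.exists_right_inv
    rw [one_def] at hq
    obtain ⟨b', c, s', t, hb, -, hbc, hst⟩ :=
      exists_single_mul_single_of_mul_eq_single one_ne_zero hq
    obtain ⟨rfl, rfl⟩ | ⟨-, rfl⟩ := single_inj.mp hb
    · exact ⟨.of_add_eq_zero c hbc, .of_mul_eq_one t hst⟩
    · exact absurd hst (by simp)
  · rintro ⟨⟨u, rfl⟩, ⟨v, rfl⟩⟩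
    refine .of_mul_eq_one (single ↑(-u) ↑v⁻¹) ?_
    rw [single_mul_single, AddUnits.add_neg, Units.mul_inv, one_def]

theorem irreducible_single_one_iff {a : M} :
    Irreducible (single a 1 : R[M]) ↔ AddIrreducible a := by
  constructor
  · intro ha
    refine ⟨fun hu ↦ ha.not_isUnit (isUnit_single_iff.mpr ⟨hu, isUnit_one⟩), fun b c hbc ↦ ?_⟩
    have h := ha.isUnit_or_isUnit (by rw [single_mul_single, one_mul, hbc])
    exact h.imp (fun h ↦ (isUnit_single_iff.mp h).1) (fun h ↦ (isUnit_single_iff.mp h).1)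
  · intro ha
    refine ⟨fun hu ↦ ha.not_isAddUnit (isUnit_single_iff.mp hu).1, fun p q hpq ↦ ?_⟩
    obtain ⟨b, c, s, t, rfl, rfl, rfl, hst⟩ :=
      exists_single_mul_single_of_mul_eq_single one_ne_zero hpq.symm
    exact (ha.isAddUnit_or_isAddUnit rfl).imp
      (fun hb ↦ isUnit_single_iff.mpr ⟨hb, .of_mul_eq_one t hst⟩)
      (fun hc ↦ isUnit_single_iff.mpr ⟨hc, .of_mul_eq_one s (mul_comm s t ▸ hst)⟩)

theorem single_one_dvd_single_one_iff {a x : M} :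
    (single a 1 : R[M]) ∣ single x 1 ↔ ∃ c, x = a + c := by
  constructor
  · rintro ⟨q, hq⟩
    obtain ⟨b, c, s, t, hb, -, rfl, -⟩ :=
      exists_single_mul_single_of_mul_eq_single one_ne_zero hq.symm
    obtain ⟨rfl, -⟩ | ⟨h, -⟩ := single_inj.mp hb
    · exact ⟨c, rfl⟩
    · exact absurd h one_ne_zero
  · rintro ⟨c, rfl⟩
    exact ⟨single c 1, by rw [single_mul_single, one_mul]⟩

end AddMonoidAlgebra

theorem isAddUnit_iff_eq_zero_of_forall_nonneg {M : Type*} [AddCommMonoid M] [PartialOrder M]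
    [IsOrderedAddMonoid M] (h : ∀ x : M, 0 ≤ x) {b : M} : IsAddUnit b ↔ b = 0 := by
  refine ⟨fun hb ↦ ?_, fun hb ↦ hb ▸ isAddUnit_zero⟩
  obtain ⟨c, hc⟩ := isAddUnit_iff_exists_neg.mp hb
  exact ((add_eq_zero_iff_of_nonneg (h b) (h c)).mp hc).1

theorem Rat.exists_nat_mul_eq_succ_mul {x a : ℚ} (hx : 0 < x) (ha : 0 < a) :
    ∃ n q : ℕ, q * x = (n + 1) * a := by
  obtain ⟨n, hn⟩ := Int.eq_succ_of_zero_lt (Rat.num_pos.mpr (div_pos hx ha))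
  refine ⟨n, (x / a).den, ?_⟩
  have h := Rat.mul_den_eq_num (x / a)
  rw [hn] at h
  push_cast at h
  rw [← h]
  field_simp

namespace AddSubmonoid

section Archimedean

variable {G : Type*} [AddCommGroup G] [LinearOrder G] [IsOrderedAddMonoid G] [Archimedean G]
  {M : AddSubmonoid G} {a : G}

theorem exists_nsmul_eq_of_forall_sub_mem (hM : ∀ x ∈ M, 0 ≤ x) (ha : 0 < a)
    (hsub : ∀ x ∈ M, x ≠ 0 → x - a ∈ M) {x : G} (hx : x ∈ M) : ∃ n : ℕ, n • a = x := by
  obtain ⟨k, hk⟩ := Archimedean.arch x ha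
  induction k generalizing x with
  | zero => exact ⟨0, (le_antisymm (by simpa using hk) (hM x hx)).symm ▸ zero_nsmul a⟩
  | succ k ih =>
    by_cases hx0 : x = 0
    · exact ⟨0, hx0 ▸ zero_nsmul a⟩
    obtain ⟨n, hn⟩ := ih (hsub x hx hx0) (sub_le_iff_le_add.mpr (succ_nsmul a k ▸ hk))
    exact ⟨n + 1, by rw [succ_nsmul, hn, sub_add_cancel]⟩

theorem nonempty_addEquiv_nat_of_forall_sub_mem (hM : ∀ x ∈ M, 0 ≤ x) (haM : a ∈ M)
    (ha : 0 < a) (hsub : ∀ x ∈ M, x ≠ 0 → x - a ∈ M) : Nonempty (M ≃+ ℕ) := by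
  have hinj : Function.Injective (multiplesHom M ⟨a, haM⟩) :=
    (nsmul_left_strictMono (show (0 : M) < ⟨a, haM⟩ from ha)).injective
  have hsurj : Function.Surjective (multiplesHom M ⟨a, haM⟩) := fun x ↦ by
    obtain ⟨n, hn⟩ := exists_nsmul_eq_of_forall_sub_mem hM ha hsub x.2
    exact ⟨n, Subtype.ext (by simpa using hn)⟩
  exact ⟨(AddEquiv.ofBijective _ ⟨hinj, hsurj⟩).symm⟩

end Archimedean

variable {M : AddSubmonoid ℚ}

theorem isEssentialGenerator_iff_notMem_closure {a : ℚ} :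
    IsEssentialGenerator M a ↔ a ∈ M ∧ a ∉ closure ((M : Set ℚ) \ {a}) := by
  refine and_congr_right fun ha ↦ ⟨fun hne hmem ↦ hne ?_, fun hnot heq ↦ hnot (by rwa [heq])⟩
  refine le_antisymm (closure_le.mpr Set.sdiff_subset) fun x hx ↦ ?_
  by_cases hxa : x = a
  · exact hxa ▸ hmem
  · exact subset_closure ⟨hx, hxa⟩

variable (hM : ∀ x ∈ M, 0 ≤ x)
include hM

theorem coe_pos_of_ne_zero {b : M} (hb : b ≠ 0) : (0 : ℚ) < b :=
  (hM b b.2).lt_of_ne fun h ↦ hb (Subtype.ext h.symm)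

theorem isAddUnit_iff_eq_zero {b : M} : IsAddUnit b ↔ b = 0 :=
  isAddUnit_iff_eq_zero_of_forall_nonneg fun x : M ↦ hM x x.2

theorem mem_closure_diff_singleton_of_not_addIrreducible {a : M} (ha : ¬AddIrreducible a) :
    (a : ℚ) ∈ closure ((M : Set ℚ) \ {(a : ℚ)}) := by
  by_cases hu : IsAddUnit a
  · rw [(isAddUnit_iff_eq_zero hM).mp hu]
    exact zero_mem _
  obtain ⟨b, c, hb, hc, rfl⟩ := (addIrreducible_or_factor hu).resolve_left ha
  have hbne : (b : ℚ) ≠ ↑(b + c) := fun h ↦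
    hc ((isAddUnit_iff_eq_zero hM).mpr (Subtype.ext (by simpa using h)))
  have hcne : (c : ℚ) ≠ ↑(b + c) := fun h ↦
    hb ((isAddUnit_iff_eq_zero hM).mpr (Subtype.ext (by simpa using h)))
  exact add_mem (subset_closure ⟨b.2, hbne⟩) (subset_closure ⟨c.2, hcne⟩)

theorem notMem_closure_diff_singleton_of_addIrreducible {a : M} (ha : AddIrreducible a) :
    (a : ℚ) ∉ closure ((M : Set ℚ) \ {(a : ℚ)}) := by
  have hsum {x y : ℚ} (hx : x ∈ M) (hy : y ∈ M) (hxy : x + y = a) : x = 0 ∨ y = 0 := by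
    have h := ha.isAddUnit_or_isAddUnit (Subtype.ext hxy.symm : a = ⟨x, hx⟩ + ⟨y, hy⟩)
    simpa only [isAddUnit_iff_eq_zero hM, mk_eq_zero] using h
  -- `M ∖ {a}` is already a submonoid, so it contains the closure.
  let N : AddSubmonoid ℚ :=
    { carrier := (M : Set ℚ) \ {(a : ℚ)}
      zero_mem' := ⟨zero_mem M, fun h ↦ ha.not_isAddUnit
        ((isAddUnit_iff_eq_zero hM).mpr (Subtype.ext h.symm))⟩
      add_mem' := fun {x y} hx hy ↦ ⟨add_mem hx.1 hy.1, fun hxy ↦ by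
        rcases hsum hx.1 hy.1 hxy with rfl | rfl
        · exact hy.2 (by simpa using hxy)
        · exact hx.2 (by simpa using hxy)⟩ }
  exact fun h ↦ (closure_le.mpr (subset_refl N.carrier) h).2 rfl

theorem isEssentialGenerator_iff_addIrreducible {a : M} :
    IsEssentialGenerator M a ↔ AddIrreducible a := by
  rw [isEssentialGenerator_iff_notMem_closure]
  exact ⟨fun h ↦ by_contra fun ha ↦ h.2 (mem_closure_diff_singleton_of_not_addIrreducible hM ha),
    fun ha ↦ ⟨a.2, notMem_closure_diff_singleton_of_addIrreducible hM ha⟩⟩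

variable {R : Type*} [CommSemiring R] [NoZeroDivisors R] [Nontrivial R]

theorem exists_eq_add_of_prime_single {a : M} (hpr : Prime (single a 1 : R[M])) {x : M}
    (hx : x ≠ 0) : ∃ c, x = a + c := by
  obtain ⟨n, q, hnq⟩ := Rat.exists_nat_mul_eq_succ_mul (coe_pos_of_ne_zero hM hx)
    (coe_pos_of_ne_zero hM (ne_zero_of_prime_single_one hpr))
  have hdvd : (single a 1 : R[M]) ∣ single x 1 ^ q := by
    rw [single_pow, one_pow, single_one_dvd_single_one_iff]
    refine ⟨n • a, Subtype.ext ?_⟩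
    push_cast [nsmul_eq_mul]
    linarith
  exact single_one_dvd_single_one_iff.mp (hpr.dvd_of_dvd_pow hdvd)

theorem nonempty_addEquiv_nat_of_prime_single {a : M} (hpr : Prime (single a 1 : R[M])) :
    Nonempty (M ≃+ ℕ) := by
  refine nonempty_addEquiv_nat_of_forall_sub_mem hM a.2 ?_ fun x hx hx0 ↦ ?_
  · exact coe_pos_of_ne_zero hM (ne_zero_of_prime_single_one hpr)
  · obtain ⟨c, hc⟩ := exists_eq_add_of_prime_single hM hpr (x := ⟨x, hx⟩) (by simpa using hx0)
    exact sub_eq_of_eq_add' (congrArg Subtype.val hc) ▸ c.2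

end AddSubmonoid

theorem monomial_irreducible_iff_essential (M : AddSubmonoid ℚ)
    (hM : ∀ x ∈ M, (0 : ℚ) ≤ x) (hnotN : ¬ Nonempty (M ≃+ ℕ))
    (F : Type*) [Field F] (a : M) :
    (Irreducible (AddMonoidAlgebra.of' F M a) ↔ IsEssentialGenerator M (a : ℚ)) ∧
      (Irreducible (AddMonoidAlgebra.of' F M a) →
        ¬ Prime (AddMonoidAlgebra.of' F M a)) := by
  rw [AddMonoidAlgebra.of'_apply, AddMonoidAlgebra.irreducible_single_one_iff,
    AddSubmonoid.isEssentialGenerator_iff_addIrreducible hM]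
  exact ⟨Iff.rfl, fun _ hpr ↦ hnotN (AddSubmonoid.nonempty_addEquiv_nat_of_prime_single hM hpr)⟩
end

section
/- Let M be the submonoid of the additive monoid ℚ₊ of nonnegative rational numbers generated by the set {1/2ⁱ : i ∈ ℕ, i ≥ 1} ∪ {1/3ʲ : j ∈ ℕ, j ≥ 1}. Then M has no essential generators, and the element 5/6 of M is of height (0, 0, 0, …) in M. -/
def invPowers (m : ℕ) : Set ℚ := {q | ∃ i : ℕ, 1 ≤ i ∧ q = 1 / (m : ℚ) ^ i}

namespace AddSubmonoid

theorem not_isEssentialGenerator_closure {S : Set ℚ} (hS : ∀ s ∈ S, s ∈ closure (S \ {s}))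
    (a : ℚ) : ¬ IsEssentialGenerator (closure S) a := by
  rintro ⟨-, hne⟩
  refine hne (le_antisymm (closure_le.2 Set.sdiff_subset) (closure_le.2 fun s hs => ?_))
  by_cases hsa : s = a
  · subst hsa
    exact closure_mono (Set.sdiff_subset_sdiff_left subset_closure) (hS s hs)
  · exact subset_closure ⟨subset_closure hs, hsa⟩

theorem mem_closure_invPowers_diff_singleton {m : ℕ} (hm : 2 ≤ m) {s : ℚ} (hs : s ∈ invPowers m) :
    s ∈ closure (invPowers m \ {s}) := by
  obtain ⟨i, -, rfl⟩ := hs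
  have hm' : (1 : ℚ) < m := by exact_mod_cast hm
  have hnext : 1 / (m : ℚ) ^ (i + 1) ∈ invPowers m \ {1 / (m : ℚ) ^ i} :=
    ⟨⟨i + 1, by omega, rfl⟩, by simpa using (pow_lt_pow_right₀ hm' i.lt_succ_self).ne'⟩
  have hmul : 1 / (m : ℚ) ^ i = m • (1 / (m : ℚ) ^ (i + 1)) := by
    rw [nsmul_eq_mul, pow_succ]
    field_simp
  have := nsmul_mem (subset_closure hnext) m
  rwa [← hmul] at this

theorem not_isEssentialGenerator_closure_invPowers_union {m n : ℕ} (hm : 2 ≤ m) (hn : 2 ≤ n)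
    (a : ℚ) : ¬ IsEssentialGenerator (closure (invPowers m ∪ invPowers n)) a := by
  refine not_isEssentialGenerator_closure (fun s hs => ?_) a
  rcases hs with hs | hs
  · exact closure_mono (Set.sdiff_subset_sdiff_left Set.subset_union_left)
      (mem_closure_invPowers_diff_singleton hm hs)
  · exact closure_mono (Set.sdiff_subset_sdiff_left Set.subset_union_right)
      (mem_closure_invPowers_diff_singleton hn hs)

theorem one_div_add_one_div_mem_closure_invPowers_union (m n : ℕ) :
    1 / (m : ℚ) + 1 / n ∈ closure (invPowers m ∪ invPowers n) :=
  add_mem (subset_closure (Or.inl ⟨1, le_rfl, by rw [pow_one]⟩))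
    (subset_closure (Or.inr ⟨1, le_rfl, by rw [pow_one]⟩))

theorem exists_eq_div_pow_succ_of_mem_closure_invPowers {m : ℕ} (hm : m ≠ 0) {x : ℚ}
    (hx : x ∈ closure (invPowers m)) : ∃ a i : ℕ, x = a / (m : ℚ) ^ (i + 1) := by
  induction hx using closure_induction with
  | mem x hx =>
    obtain ⟨i, hi, rfl⟩ := hx
    exact ⟨1, i - 1, by rw [Nat.sub_add_cancel hi, Nat.cast_one]⟩
  | zero => exact ⟨0, 0, by simp⟩
  | add x y _ _ hx hy =>
    obtain ⟨a, i, rfl⟩ := hx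
    obtain ⟨b, j, rfl⟩ := hy
    refine ⟨a * m ^ (j + 1) + b * m ^ (i + 1), i + j + 1, ?_⟩
    push_cast
    field_simp
    ring

theorem eq_pow_of_div_pow_add_div_pow_eq {m n : ℕ} (hm : 2 ≤ m) (hn : 2 ≤ n) (hmn : m.Coprime n)
    {u v i j : ℕ} (h : (u : ℚ) / m ^ (i + 1) + v / n ^ (j + 1) = 1 / m + 1 / n) :
    u = m ^ i ∧ v = n ^ j := by
  have hcross : ((u : ℤ) - m ^ i) * n ^ (j + 1) = (n ^ j - v) * m ^ (i + 1) := by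
    have hm0 : (m : ℚ) ≠ 0 := by positivity
    have hn0 : (n : ℚ) ≠ 0 := by positivity
    field_simp at h
    have : ((u : ℚ) - m ^ i) * n ^ (j + 1) = (n ^ j - v) * m ^ (i + 1) :=
      mul_left_cancel₀ (mul_ne_zero hm0 hn0) (by linear_combination h)
    exact_mod_cast this
  -- `k` is the integer by which the decomposition `u/m^(i+1) + v/n^(j+1)` is shifted from
  -- `1/m + 1/n`.
  obtain ⟨k, hk⟩ : (m : ℤ) ^ (i + 1) ∣ u - m ^ i :=
    (Nat.isCoprime_iff_coprime.2 hmn).pow.dvd_of_dvd_mul_right ⟨_, hcross.trans (mul_comm _ _)⟩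
  have hk' : (n : ℤ) ^ j - v = n ^ (j + 1) * k :=
    mul_left_cancel₀ (pow_ne_zero (i + 1) (by omega : (m : ℤ) ≠ 0))
      (by linear_combination -hcross + n ^ (j + 1) * hk)
  have hu : (u : ℤ) = m ^ i * (1 + m * k) := by linear_combination hk
  have hv : (v : ℤ) = n ^ j * (1 - n * k) := by linear_combination -hk'
  have hmk : 0 ≤ 1 + m * (k : ℤ) :=
    nonneg_of_mul_nonneg_right (hu ▸ u.cast_nonneg) (by positivity)
  have hnk : 0 ≤ 1 - n * (k : ℤ) :=
    nonneg_of_mul_nonneg_right (hv ▸ v.cast_nonneg) (by positivity)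
  obtain rfl : k = 0 := by nlinarith
  simp only [mul_zero, add_zero, sub_zero, mul_one] at hu hv
  exact ⟨by exact_mod_cast hu, by exact_mod_cast hv⟩

theorem isHeightZero_one_div_add_one_div {m n : ℕ} (hm : 2 ≤ m) (hn : 2 ≤ n) (hmn : m.Coprime n) :
    IsHeightZero (closure (invPowers m ∪ invPowers n)) (1 / m + 1 / n) := by
  rintro p hp ⟨x, hx, hpx⟩
  rw [closure_union, mem_sup] at hx
  obtain ⟨y, hy, z, hz, rfl⟩ := hx
  obtain ⟨a, i, rfl⟩ := exists_eq_div_pow_succ_of_mem_closure_invPowers (by omega) hy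
  obtain ⟨b, j, rfl⟩ := exists_eq_div_pow_succ_of_mem_closure_invPowers (by omega) hz
  obtain ⟨hu, hv⟩ := eq_pow_of_div_pow_add_div_pow_eq hm hn hmn (u := p * a) (v := p * b)
    (i := i) (j := j) (by rw [← hpx]; push_cast; ring)
  exact hp.one_lt.ne' (Nat.eq_one_of_dvd_coprimes (hmn.pow i j) (hu ▸ dvd_mul_right p a)
    (hv ▸ dvd_mul_right p b))

end AddSubmonoid

theorem example_monoid_no_essential_and_heightZero
    (M : AddSubmonoid ℚ)
    (hMdef : M = AddSubmonoid.closure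
      ({q : ℚ | ∃ i : ℕ, 1 ≤ i ∧ q = 1 / 2 ^ i} ∪
       {q : ℚ | ∃ j : ℕ, 1 ≤ j ∧ q = 1 / 3 ^ j})) :
    (∀ a : ℚ, ¬ IsEssentialGenerator M a) ∧
      (5 / 6 : ℚ) ∈ M ∧ IsHeightZero M (5 / 6 : ℚ) := by
  have hM : M = AddSubmonoid.closure (invPowers 2 ∪ invPowers 3) := by
    simpa only [invPowers, Nat.cast_ofNat] using hMdef
  have h56 : (5 / 6 : ℚ) = 1 / (2 : ℕ) + 1 / (3 : ℕ) := by norm_num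
  subst hM
  rw [h56]
  exact ⟨AddSubmonoid.not_isEssentialGenerator_closure_invPowers_union le_rfl (by norm_num),
    AddSubmonoid.one_div_add_one_div_mem_closure_invPowers_union 2 3,
    AddSubmonoid.isHeightZero_one_div_add_one_div le_rfl (by norm_num) (by norm_num)⟩
end

section
/- Let M be the submonoid of the additive monoid ℚ₊ of nonnegative rational numbers generated by the set {1/2ⁱ : i ∈ ℕ, i ≥ 1} ∪ {1/3ʲ : j ∈ ℕ, j ≥ 1}, and let F be a field of characteristic 0. Then the monoid domain F[X;M] is not an AP domain, i.e., there exists an irreducible element of F[X;M] that is not prime. -/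
/-!
`X^(1/3) + X^(1/2)` is not prime: it divides
`X^(2/3) (1 - X^(1/3)) = (X^(1/3) + X^(1/2)) (X^(1/3) - X^(1/2))`, but comparing least and
largest exponents shows that it divides neither factor.

It is irreducible: in a factorization the largest exponents of the two factors add up to `1/2`.
The finitely many exponents involved all lie in `ℕ/3^(n+1) + ℕ/2^(n+1)` for some `n`, and this
lattice parametrizes the exponents below `1` injectively, so the factorization lifts to one of
`Y^(3^n) + X^(2^n)` in `F[X][Y]`. That polynomial is irreducible because `-X^(2^n)` is not a cube
in `F(X)`.
-/

open Filter

namespace AddMonoidAlgebra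

section LinearOrder

variable {R A : Type*} [Semiring R] [NoZeroDivisors R]
  [AddCommMonoid A] [LinearOrder A] [IsOrderedCancelAddMonoid A] {f g : AddMonoidAlgebra R A}
  {t u v : A}

theorem add_le_of_forall_mem_support_mul_le (ht : ∀ c ∈ (f * g).coeff.support, c ≤ t)
    (hu : u ∈ f.coeff.support) (hv : v ∈ g.coeff.support) : u + v ≤ t := by
  have hmax : f.coeff.support.max' ⟨u, hu⟩ + g.coeff.support.max' ⟨v, hv⟩ ∈
      (f * g).coeff.support := by
    rw [Finsupp.mem_support_iff, coeff_mul_add_of_uniqueAdd fun a b ha hb hab =>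
      (add_eq_add_iff_eq_and_eq (f.coeff.support.le_max' a ha)
        (g.coeff.support.le_max' b hb)).1 hab]
    exact mul_ne_zero (Finsupp.mem_support_iff.1 (Finset.max'_mem _ _))
      (Finsupp.mem_support_iff.1 (Finset.max'_mem _ _))
  exact (add_le_add (f.coeff.support.le_max' u hu) (g.coeff.support.le_max' v hv)).trans
    (ht _ hmax)

theorem le_add_of_forall_le_mem_support_mul (ht : ∀ c ∈ (f * g).coeff.support, t ≤ c)
    (hu : u ∈ f.coeff.support) (hv : v ∈ g.coeff.support) : t ≤ u + v := by
  have hmin : f.coeff.support.min' ⟨u, hu⟩ + g.coeff.support.min' ⟨v, hv⟩ ∈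
      (f * g).coeff.support := by
    rw [Finsupp.mem_support_iff, coeff_mul_add_of_uniqueAdd fun a b ha hb hab =>
      ((add_eq_add_iff_eq_and_eq (f.coeff.support.min'_le a ha)
        (g.coeff.support.min'_le b hb)).1 hab.symm).imp Eq.symm Eq.symm]
    exact mul_ne_zero (Finsupp.mem_support_iff.1 (Finset.min'_mem _ _))
      (Finsupp.mem_support_iff.1 (Finset.min'_mem _ _))
  exact (ht _ hmin).trans
    (add_le_add (f.coeff.support.min'_le u hu) (g.coeff.support.min'_le v hv))

end LinearOrder

theorem exists_mapDomainRingHom_eq {R A B : Type*} [Semiring R] [AddMonoid A] [AddMonoid B]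
    [Nonempty A] {f : A →+ B} {x : AddMonoidAlgebra R B}
    (hx : ↑x.coeff.support ⊆ Set.range f) :
    ∃ y, mapDomainRingHom R f y = x ∧ ∀ a ∈ y.coeff.support, f a ∈ x.coeff.support := by
  classical
  refine ⟨mapDomain (Function.invFun f) x, coeff_injective ?_, fun a ha => ?_⟩
  · change Finsupp.mapDomain f (Finsupp.mapDomain _ x.coeff) = x.coeff
    rw [← Finsupp.mapDomain_comp]
    exact (Finsupp.mapDomain_congr fun b hb => Function.invFun_eq (hx hb)).trans
      Finsupp.mapDomain_id
  · obtain ⟨b, hb, rfl⟩ := Finset.mem_image.1 (Finsupp.mapDomain_support ha)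
    rwa [Function.invFun_eq (hx hb)]

end AddMonoidAlgebra

namespace Polynomial

theorem natTrailingDegree_pow {R : Type*} [Semiring R] [NoZeroDivisors R] (p : R[X]) (k : ℕ) :
    (p ^ k).natTrailingDegree = k * p.natTrailingDegree := by
  rcases eq_or_ne p 0 with rfl | hp
  · cases k <;> simp
  induction k with
  | zero => simp
  | succ k ih => rw [pow_succ, natTrailingDegree_mul (pow_ne_zero _ hp) hp, ih, add_one_mul]

theorem pow_ne_algebraMap_X_pow {F K : Type*} [Field F] [Field K] [Algebra F[X] K]
    [IsFractionRing F[X] K] {p m : ℕ} (hpm : ¬ p ∣ m) (t : K) :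
    t ^ p ≠ algebraMap F[X] K (X ^ m) := by
  intro ht
  obtain ⟨n, d, hd, rfl⟩ := IsFractionRing.div_surjective F[X] t
  have hd0 : d ≠ 0 := nonZeroDivisors.ne_zero hd
  have hnd : n ^ p = X ^ m * d ^ p := by
    apply IsFractionRing.injective F[X] K
    rw [map_mul, map_pow _ n, map_pow _ d, ← ht, div_pow, div_mul_cancel₀]
    exact pow_ne_zero _ (IsFractionRing.to_map_ne_zero_of_mem_nonZeroDivisors hd)
  have hdeg := congrArg natTrailingDegree hnd
  rw [natTrailingDegree_pow, natTrailingDegree_mul (pow_ne_zero _ X_ne_zero) (pow_ne_zero _ hd0),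
    natTrailingDegree_X_pow, natTrailingDegree_pow] at hdeg
  exact hpm ((Nat.dvd_add_left (dvd_mul_right p _)).1 (hdeg ▸ dvd_mul_right p _))

theorem irreducible_X_pow_add_C_X_pow {F : Type*} [Field F] {p : ℕ} (hp : p.Prime) (hp2 : p ≠ 2)
    (k : ℕ) {m : ℕ} (hpm : ¬ p ∣ m) : Irreducible (X ^ (p ^ k) + C (X ^ m) : F[X][X]) := by
  have hmonic : (X ^ (p ^ k) - C (-(X ^ m)) : F[X][X]).Monic :=
    monic_X_pow_sub_C _ (pow_ne_zero _ hp.ne_zero)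
  rw [← sub_neg_eq_add, ← map_neg C,
    hmonic.irreducible_iff_irreducible_map_fraction_map (K := FractionRing F[X]),
    Polynomial.map_sub, Polynomial.map_pow, map_X, map_C]
  refine X_pow_sub_C_irreducible_of_prime_pow hp hp2 k fun t ht =>
    pow_ne_algebraMap_X_pow (F := F) hpm (-t) ?_
  rw [Odd.neg_pow (hp.odd_of_ne_two hp2), ht, map_neg, neg_neg]

end Polynomial

open Polynomial in
theorem AddMonoidAlgebra.irreducible_single_add_single {F : Type*} [Field F] {p : ℕ}
    (hp : p.Prime) (hp2 : p ≠ 2) (k : ℕ) {m : ℕ} (hpm : ¬ p ∣ m) :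
    Irreducible (single (p ^ k, 0) 1 + single (0, m) 1 : AddMonoidAlgebra F (ℕ × ℕ)) := by
  let e : AddMonoidAlgebra F (ℕ × ℕ) ≃+* F[X][X] := curryRingEquiv.trans <|
    (toFinsuppIso (AddMonoidAlgebra F ℕ)).symm.trans (mapEquiv (toFinsuppIso F).symm)
  rw [← MulEquiv.irreducible_iff e]
  convert irreducible_X_pow_add_C_X_pow (F := F) hp hp2 k hpm using 1
  simp [e, ← C_mul_X_pow_eq_monomial]

theorem Nat.eq_of_mul_add_mul_eq {a b x y x' y' : ℕ} (hab : a.Coprime b) (hx : x < a)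
    (hx' : x' < a) (h : x * b + y * a = x' * b + y' * a) : x = x' := by
  have hmod : x * b ≡ x' * b [MOD a] := by
    simpa [Nat.ModEq, Nat.add_mul_mod_self_right] using congrArg (· % a) h
  exact (Nat.ModEq.cancel_right_of_coprime hab hmod).eq_of_lt_of_lt hx hx'

def dyadicTriadic : AddSubmonoid ℚ :=
  AddSubmonoid.closure
    ({q : ℚ | ∃ i : ℕ, 1 ≤ i ∧ q = 1 / 2 ^ i} ∪
      {q : ℚ | ∃ j : ℕ, 1 ≤ j ∧ q = 1 / 3 ^ j})

namespace dyadicTriadic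

theorem one_div_two_pow_mem {i : ℕ} (hi : 1 ≤ i) : (1 / 2 ^ i : ℚ) ∈ dyadicTriadic :=
  AddSubmonoid.subset_closure (Or.inl ⟨i, hi, rfl⟩)

theorem one_div_three_pow_mem {j : ℕ} (hj : 1 ≤ j) : (1 / 3 ^ j : ℚ) ∈ dyadicTriadic :=
  AddSubmonoid.subset_closure (Or.inr ⟨j, hj, rfl⟩)

theorem zero_le (q : dyadicTriadic) : 0 ≤ q := by
  obtain ⟨q, hq⟩ := q
  change (0 : ℚ) ≤ q
  induction hq using AddSubmonoid.closure_induction with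
  | mem q hq => rcases hq with ⟨i, -, rfl⟩ | ⟨j, -, rfl⟩ <;> positivity
  | zero => rfl
  | add a b _ _ ha hb => positivity

def grid (n : ℕ) : ℕ × ℕ →+ dyadicTriadic :=
  (multiplesHom _ ⟨1 / 3 ^ (n + 1), one_div_three_pow_mem (Nat.le_add_left 1 n)⟩).coprod
    (multiplesHom _ ⟨1 / 2 ^ (n + 1), one_div_two_pow_mem (Nat.le_add_left 1 n)⟩)

theorem coe_grid (n : ℕ) (z : ℕ × ℕ) :
    (grid n z : ℚ) = z.1 / 3 ^ (n + 1) + z.2 / 2 ^ (n + 1) := by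
  simp [grid, div_eq_mul_inv]

theorem eventually_mem_range_grid (q : dyadicTriadic) :
    ∀ᶠ n in atTop, q ∈ Set.range (grid n) := by
  obtain ⟨q, hq⟩ := q
  suffices ∀ᶠ n in atTop, ∃ z, (grid n z : ℚ) = q from
    this.mono fun n ⟨z, hz⟩ => ⟨z, Subtype.ext hz⟩
  induction hq using AddSubmonoid.closure_induction with
  | mem q hq =>
    refine eventually_atTop.2 ?_
    rcases hq with ⟨i, -, rfl⟩ | ⟨j, -, rfl⟩
    · refine ⟨i, fun n hn => ⟨(0, 2 ^ (n + 1 - i)), ?_⟩⟩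
      have h2 : (2 : ℚ) ^ (n + 1) = 2 ^ (n + 1 - i) * 2 ^ i := by
        rw [← pow_add]; congr 1; omega
      rw [coe_grid, h2]
      field_simp
      simp
    · refine ⟨j, fun n hn => ⟨(3 ^ (n + 1 - j), 0), ?_⟩⟩
      have h3 : (3 : ℚ) ^ (n + 1) = 3 ^ (n + 1 - j) * 3 ^ j := by
        rw [← pow_add]; congr 1; omega
      rw [coe_grid, h3]
      field_simp
      simp
  | zero => exact Eventually.of_forall fun n => ⟨0, by simp⟩
  | add a b _ _ ha hb =>
    exact (ha.and hb).mono fun n ⟨⟨z, hz⟩, ⟨w, hw⟩⟩ => ⟨z + w, by simp [hz, hw]⟩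

theorem grid_injOn (n : ℕ) : Set.InjOn (grid n) {z | (grid n z : ℚ) < 1} := by
  have lt_of_grid_lt_one (z : ℕ × ℕ) (hz : (grid n z : ℚ) < 1) :
      z.1 < 3 ^ (n + 1) ∧ z.2 < 2 ^ (n + 1) := by
    rw [coe_grid] at hz
    have h1 : (z.1 / 3 ^ (n + 1) : ℚ) < 1 := by
      linarith [show (0 : ℚ) ≤ z.2 / 2 ^ (n + 1) by positivity]
    have h2 : (z.2 / 2 ^ (n + 1) : ℚ) < 1 := by
      linarith [show (0 : ℚ) ≤ z.1 / 3 ^ (n + 1) by positivity]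
    rw [div_lt_one (by positivity)] at h1 h2
    exact ⟨by exact_mod_cast h1, by exact_mod_cast h2⟩
  intro z hz w hw hzw
  obtain ⟨hz1, hz2⟩ := lt_of_grid_lt_one z hz
  obtain ⟨hw1, hw2⟩ := lt_of_grid_lt_one w hw
  have hq := congrArg Subtype.val hzw
  rw [coe_grid, coe_grid, div_add_div _ _ (by positivity) (by positivity),
    div_add_div _ _ (by positivity) (by positivity), div_left_inj' (by positivity)] at hq
  have hN : z.1 * 2 ^ (n + 1) + z.2 * 3 ^ (n + 1) = w.1 * 2 ^ (n + 1) + w.2 * 3 ^ (n + 1) := by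
    exact_mod_cast (by linarith : (z.1 * 2 ^ (n + 1) + z.2 * 3 ^ (n + 1) : ℚ) =
      w.1 * 2 ^ (n + 1) + w.2 * 3 ^ (n + 1))
  have hcop : (3 ^ (n + 1)).Coprime (2 ^ (n + 1)) := Nat.Coprime.pow _ _ (by norm_num)
  exact Prod.ext (Nat.eq_of_mul_add_mul_eq hcop hz1 hw1 hN)
    (Nat.eq_of_mul_add_mul_eq (y := z.1) (y' := w.1) hcop.symm hz2 hw2 (by linarith))

def third : dyadicTriadic := ⟨1 / 3, by simpa using one_div_three_pow_mem le_rfl⟩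

def half : dyadicTriadic := ⟨1 / 2, by simpa using one_div_two_pow_mem le_rfl⟩

theorem zero_lt_third : 0 < third := by
  change (0 : ℚ) < 1 / 3
  norm_num

theorem third_lt_half : third < half := by
  change (1 / 3 : ℚ) < 1 / 2
  norm_num

theorem half_add_half : half + half = third + third + third := by
  ext
  change (1 / 2 + 1 / 2 : ℚ) = 1 / 3 + 1 / 3 + 1 / 3
  norm_num

theorem grid_three_pow (n : ℕ) : grid n (3 ^ n, 0) = third := by
  ext
  rw [coe_grid]
  change _ = (1 / 3 : ℚ)
  push_cast
  rw [pow_succ (3 : ℚ)]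
  field_simp
  simp

theorem grid_two_pow (n : ℕ) : grid n (0, 2 ^ n) = half := by
  ext
  rw [coe_grid]
  change _ = (1 / 2 : ℚ)
  push_cast
  rw [pow_succ (2 : ℚ)]
  field_simp
  simp

end dyadicTriadic

section

open AddMonoidAlgebra dyadicTriadic

variable {F : Type*} [Field F]

variable (F) in
noncomputable def thirdAddHalf : AddMonoidAlgebra F dyadicTriadic :=
  single third 1 + single half 1

theorem mem_support_thirdAddHalf {c : dyadicTriadic} :
    c ∈ (thirdAddHalf F).coeff.support ↔ c = third ∨ c = half := by
  classical
  rw [thirdAddHalf, AddMonoidAlgebra.coeff_add, coeff_single, coeff_single,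
    Finsupp.support_single_add_single third_lt_half.ne one_ne_zero one_ne_zero]
  simp

theorem le_half_of_mem_support_thirdAddHalf {c : dyadicTriadic}
    (hc : c ∈ (thirdAddHalf F).coeff.support) : c ≤ half := by
  rcases mem_support_thirdAddHalf.1 hc with rfl | rfl
  exacts [third_lt_half.le, le_rfl]

theorem third_le_of_mem_support_mul {w : AddMonoidAlgebra F dyadicTriadic} {c : dyadicTriadic}
    (hc : c ∈ (thirdAddHalf F * w).coeff.support) : third ≤ c := by
  classical
  obtain ⟨u, hu, v, -, rfl⟩ := Finset.mem_add.1 (support_coeff_mul_subset _ _ hc)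
  have hu : third ≤ u :=
    (mem_support_thirdAddHalf.1 hu).elim ge_of_eq fun h => h ▸ third_lt_half.le
  exact le_add_of_le_of_nonneg hu (zero_le v)

theorem not_dvd_of_zero_mem_support {y : AddMonoidAlgebra F dyadicTriadic}
    (hy : 0 ∈ y.coeff.support) : ¬ thirdAddHalf F ∣ y := by
  rintro ⟨w, rfl⟩
  exact zero_lt_third.not_ge (third_le_of_mem_support_mul hy)

theorem not_isUnit_thirdAddHalf : ¬ IsUnit (thirdAddHalf F) :=
  fun hu => not_dvd_of_zero_mem_support (by simp [one_def]) (isUnit_iff_dvd_one.1 hu)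

theorem not_dvd_single_third_sq : ¬ thirdAddHalf F ∣ single third 1 ^ 2 := by
  rintro ⟨w, hw⟩
  obtain ⟨v, hv⟩ : w.coeff.support.Nonempty := by
    rw [Finsupp.support_nonempty_iff, Ne, coeff_eq_zero]
    rintro rfl
    simp at hw
  have hsupp : ∀ c ∈ (thirdAddHalf F * w).coeff.support, c = third + third := by
    simp [← hw, pow_two, single_mul_single]
  have hupper : half + v ≤ third + third := add_le_of_forall_mem_support_mul_le
    (fun c hc => (hsupp c hc).le) (mem_support_thirdAddHalf.2 (Or.inr rfl)) hv
  have hlower : third + third ≤ third + v := le_add_of_forall_le_mem_support_mul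
    (fun c hc => (hsupp c hc).ge) (mem_support_thirdAddHalf.2 (Or.inl rfl)) hv
  have hsum : half + third ≤ third + third :=
    (add_le_add le_rfl (le_of_add_le_add_left hlower)).trans hupper
  exact third_lt_half.not_ge (le_of_add_le_add_right hsum)

theorem not_dvd_one_sub_single_third : ¬ thirdAddHalf F ∣ 1 - single third 1 :=
  not_dvd_of_zero_mem_support (by simp [one_def, zero_lt_third.ne])

theorem thirdAddHalf_mul :
    thirdAddHalf F * (single third 1 - single half 1) =
      single third 1 ^ 2 * (1 - single third 1) := by
  have hsq : (single half 1 * single half 1 : AddMonoidAlgebra F dyadicTriadic) =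
      single third 1 ^ 3 := by
    simp [single_mul_single, pow_succ, half_add_half]
  rw [thirdAddHalf]
  linear_combination (-1 : AddMonoidAlgebra F dyadicTriadic) * hsq

theorem not_prime_thirdAddHalf : ¬ Prime (thirdAddHalf F) := fun hp =>
  (hp.dvd_or_dvd ⟨_, thirdAddHalf_mul.symm⟩).elim not_dvd_single_third_sq
    not_dvd_one_sub_single_third

variable (F) in
noncomputable def thirdAddHalfLift (n : ℕ) : AddMonoidAlgebra F (ℕ × ℕ) :=
  single (3 ^ n, 0) 1 + single (0, 2 ^ n) 1

theorem irreducible_thirdAddHalfLift (n : ℕ) : Irreducible (thirdAddHalfLift F n) :=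
  irreducible_single_add_single Nat.prime_three (by norm_num) n
    fun h => by simpa using Nat.prime_three.dvd_of_dvd_pow h

theorem mapDomainRingHom_thirdAddHalfLift (n : ℕ) :
    mapDomainRingHom F (grid n) (thirdAddHalfLift F n) = thirdAddHalf F := by
  simp [thirdAddHalfLift, thirdAddHalf, mapDomain_add, grid_three_pow, grid_two_pow]

theorem mapDomainRingHom_grid_injOn (n : ℕ) :
    Set.InjOn (mapDomainRingHom F (grid n)) {P | ∀ z ∈ P.coeff.support, grid n z ≤ half} :=
  fun P hP Q hQ h => coeff_injective <| Finsupp.mapDomain_injOn _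
    ((grid_injOn n).mono fun z hz =>
      (show (grid n z : ℚ) ≤ 1 / 2 from hz).trans_lt (by norm_num))
    hP hQ (congrArg coeff h)

theorem irreducible_thirdAddHalf : Irreducible (thirdAddHalf F) := by
  classical
  refine ⟨not_isUnit_thirdAddHalf, fun g h hgh => ?_⟩
  have hexp : ∀ u ∈ g.coeff.support, ∀ v ∈ h.coeff.support, u + v ≤ half :=
    fun u hu v hv => add_le_of_forall_mem_support_mul_le
      (fun c hc => le_half_of_mem_support_thirdAddHalf (hgh ▸ hc)) hu hv
  obtain ⟨n, hgn, hhn⟩ : ∃ n, (∀ q ∈ g.coeff.support, q ∈ Set.range (grid n)) ∧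
      ∀ q ∈ h.coeff.support, q ∈ Set.range (grid n) :=
    (((eventually_all_finset _).2 fun q _ => eventually_mem_range_grid q).and
      ((eventually_all_finset _).2 fun q _ => eventually_mem_range_grid q)).exists
  obtain ⟨G, rfl, hG⟩ := exists_mapDomainRingHom_eq hgn
  obtain ⟨H, rfl, hH⟩ := exists_mapDomainRingHom_eq hhn
  have hGH : G * H = thirdAddHalfLift F n := by
    refine mapDomainRingHom_grid_injOn n (fun z hz => ?_) (fun z hz => ?_) ?_
    · obtain ⟨a, ha, b, hb, rfl⟩ := Finset.mem_add.1 (support_coeff_mul_subset _ _ hz)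
      rw [map_add]
      exact hexp _ (hG a ha) _ (hH b hb)
    · rw [thirdAddHalfLift, AddMonoidAlgebra.coeff_add, coeff_single, coeff_single] at hz
      rcases Finset.mem_union.1 (Finsupp.support_add hz) with hz | hz <;>
        rw [Finset.mem_singleton.1 (Finsupp.support_single_subset hz)]
      exacts [grid_three_pow n ▸ third_lt_half.le, grid_two_pow n ▸ le_rfl]
    · rw [map_mul, mapDomainRingHom_thirdAddHalfLift, hgh]
  rcases (irreducible_thirdAddHalfLift n).isUnit_or_isUnit hGH.symm with hu | hu
  exacts [Or.inl (hu.map _), Or.inr (hu.map _)]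

end

theorem example_monoid_not_AP_general
    (M : AddSubmonoid ℚ)
    (hMdef : M = AddSubmonoid.closure
      ({q : ℚ | ∃ i : ℕ, 1 ≤ i ∧ q = 1 / 2 ^ i} ∪
       {q : ℚ | ∃ j : ℕ, 1 ≤ j ∧ q = 1 / 3 ^ j}))
    (F : Type*) [Field F] :
    ∃ x : AddMonoidAlgebra F M, Irreducible x ∧ ¬ Prime x := by
  subst hMdef
  exact ⟨thirdAddHalf F, irreducible_thirdAddHalf, not_prime_thirdAddHalf⟩

theorem example_monoid_not_AP
    (M : AddSubmonoid ℚ)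
    (hMdef : M = AddSubmonoid.closure
      ({q : ℚ | ∃ i : ℕ, 1 ≤ i ∧ q = 1 / 2 ^ i} ∪
       {q : ℚ | ∃ j : ℕ, 1 ≤ j ∧ q = 1 / 3 ^ j}))
    (F : Type*) [Field F] [CharZero F] :
    ∃ x : AddMonoidAlgebra F M, Irreducible x ∧ ¬ Prime x :=
  example_monoid_not_AP_general M hMdef F
end
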